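/- arXiv:2001.08549 — 6 statements merged into one kernel-verified Lean document; each statement's English description precedes it below -/
import Mathlib

section
/- There is a function ε(n) → 0 such that for all sufficiently large n, the Dushnik–Miller dimension of the divisibility poset on {1,…,n} is at least (1/16 − ε(n))·(log n)²/(log log n)². Equivalently: for every ε > 0 there exists N such that for all n ≥ N, dim(D_{[n]}) ≥ (1/16 − ε)·(log n)²/(log log n)². -/
/-!
Dushnik's counting argument: if some coordinate of a realizer of dimension `d` puts each point of
a set of `j²` points strictly above any `2j - 2` of the others, then `d ≥ j² - j + 1`. An order
embedding of `(D_{[n]}, ∣)` does this on the primes `p ≤ z` as soon as `z ^ (2j - 2) ≤ n`, because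
a prime does not divide a product of other primes. With `z = ⌊(log n)²⌋` and
`j = ⌈log n / (4 log log n)⌉`, Chebyshev's bound `π(z) ≫ z / log z` supplies the `j²` primes, and
`j² - j + 1 ≥ (1/16 - ε) (log n)² / (log log n)²` for large `n`.
-/

open Finset Real Filter
open scoped Nat.Prime

/-- The Dushnik-Miller dimension of the divisibility poset on a set `S ⊆ ℕ`:
the least `d` such that there is an order embedding of `(S, ∣)` into `ℝ^d`
with the componentwise order. -/
noncomputable def divDim (S : Set ℕ) : ℕ :=
  sInf {d : ℕ | ∃ f : ℕ → (Fin d → ℝ), ∀ a ∈ S, ∀ b ∈ S, (f a ≤ f b ↔ a ∣ b)}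

section Suitable

variable {ι α β : Type*} [DecidableEq α]

/-- Dushnik's `k`-suitability of a realizer, restricted to the points of `P`. -/
def IsSuitable [LT β] (g : ι → α → β) (P : Finset α) (k : ℕ) : Prop :=
  ∀ x ∈ P, ∀ B ⊆ P.erase x, #B ≤ k → ∃ c, ∀ y ∈ B, g c y < g c x

variable [Fintype ι] [LinearOrder β]

def topCoords (g : ι → α → β) (J : Finset α) (x : α) : Finset ι :=
  univ.filter fun c => ∀ y ∈ J.erase x, g c y < g c x

lemma disjoint_topCoords (g : ι → α → β) {J : Finset α} {x x' : α} (hx : x ∈ J) (hx' : x' ∈ J)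
    (hne : x ≠ x') : Disjoint (topCoords g J x) (topCoords g J x') := by
  refine disjoint_left.2 fun c hc hc' => ?_
  simp only [topCoords, mem_filter, mem_univ, true_and] at hc hc'
  exact (hc x' (mem_erase.2 ⟨hne.symm, hx'⟩)).asymm (hc' x (mem_erase.2 ⟨hne, hx⟩))

lemma exists_card_topCoords_lt (g : ι → α → β) {J : Finset α} {j : ℕ} (hJ : #J = j)
    (hι : Fintype.card ι < j * j) : ∃ x ∈ J, #(topCoords g J x) < j := by
  classical
  apply exists_lt_of_sum_lt
  calc ∑ x ∈ J, #(topCoords g J x)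
      = #(J.biUnion (topCoords g J)) :=
        (card_biUnion fun x hx x' hx' hne => disjoint_topCoords g hx hx' hne).symm
    _ ≤ Fintype.card ι := card_le_univ _
    _ < ∑ _x ∈ J, j := by rwa [sum_const, hJ, smul_eq_mul]

theorem IsSuitable.mul_self_add_one_le {g : ι → α → β} {P : Finset α} {j : ℕ} (hj : 0 < j)
    (hP : j * j ≤ #P) (hg : IsSuitable g P (2 * j - 2)) : j * j + 1 ≤ Fintype.card ι + j := by
  by_contra! hd
  have hPne : P.Nonempty := card_pos.1 (lt_of_lt_of_le (Nat.mul_pos hj hj) hP)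
  choose t htP htmax using fun c => P.exists_max_image (g c) hPne
  have hT : #(univ.image t) ≤ Fintype.card ι := card_image_le
  obtain ⟨J, hJ, hJcard⟩ := exists_subset_card_eq (s := P \ univ.image t) (n := j) <| by
    have := le_card_sdiff (univ.image t) P
    omega
  -- `x` avoids every coordinate maximum `t c` and tops `J` in fewer than `j` coordinates, so no
  -- coordinate puts it above the other points of `J` together with the maxima of those coordinates.
  obtain ⟨x, hxJ, hx⟩ := exists_card_topCoords_lt g hJcard (by omega)
  obtain ⟨hxP, hxT⟩ := mem_sdiff.1 (hJ hxJ)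
  set B := J.erase x ∪ (topCoords g J x).image t
  have hBP : B ⊆ P.erase x := by
    refine union_subset (fun y hy => ?_) (fun y hy => ?_)
    · exact mem_erase.2 ⟨(mem_erase.1 hy).1, (mem_sdiff.1 (hJ (mem_erase.1 hy).2)).1⟩
    · obtain ⟨c, -, rfl⟩ := mem_image.1 hy
      exact mem_erase.2 ⟨fun h => hxT (h ▸ mem_image_of_mem t (mem_univ c)), htP c⟩
  have hB : #B ≤ 2 * j - 2 := by
    have h1 : #B ≤ #(J.erase x) + #((topCoords g J x).image t) := card_union_le _ _
    have h2 : #((topCoords g J x).image t) ≤ #(topCoords g J x) := card_image_le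
    rw [card_erase_of_mem hxJ, hJcard] at h1
    omega
  obtain ⟨c, hc⟩ := hg x hxP B hBP hB
  by_cases hcx : c ∈ topCoords g J x
  · exact (hc (t c) (mem_union_right _ (mem_image_of_mem t hcx))).not_ge (htmax c x hxP)
  · simp only [topCoords, mem_filter, mem_univ, true_and, not_forall] at hcx
    obtain ⟨y, hy, hyx⟩ := hcx
    exact hyx (hc y (mem_union_left _ hy))

end Suitable

section Divisibility

open Nat in
lemma isSuitable_primesLE {ι β : Type*} [LinearOrder β] {n z k : ℕ} (hk : 0 < k)
    (hzn : z ^ k ≤ n) {f : ℕ → ι → β}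
    (hf : ∀ a ∈ Set.Icc 1 n, ∀ b ∈ Set.Icc 1 n, f a ≤ f b ↔ a ∣ b) :
    IsSuitable (fun c p => f p c) (primesLE z) k := by
  intro x hx B hB hBk
  have hxz : x ≤ z := le_of_mem_primesLE hx
  have hBz : ∀ y ∈ B, y ≤ z := fun y hy => le_of_mem_primesLE (erase_subset x _ (hB hy))
  have hprime : ∀ y ∈ B, y.Prime := fun y hy => prime_of_mem_primesLE (erase_subset x _ (hB hy))
  have hz : z ≤ n := (Nat.le_self_pow hk.ne' z).trans hzn
  have hxn : x ∈ Set.Icc 1 n := ⟨(one_lt_of_mem_primesLE hx).le, hxz.trans hz⟩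
  have hbn : ∏ y ∈ B, y ∈ Set.Icc 1 n := by
    refine ⟨one_le_prod' fun y hy => (hprime y hy).one_lt.le, ?_⟩
    calc ∏ y ∈ B, y ≤ z ^ #B := prod_le_pow_card B _ z hBz
      _ ≤ z ^ k := Nat.pow_le_pow_right (by have := one_lt_of_mem_primesLE hx; omega) hBk
      _ ≤ n := hzn
  have hxb : ¬ x ∣ ∏ y ∈ B, y := by
    intro hdvd
    obtain ⟨y, hy, hxy⟩ := (prime_of_mem_primesLE hx).prime.exists_mem_finset_dvd hdvd
    have hxy : x = y := (prime_dvd_prime_iff_eq (prime_of_mem_primesLE hx) (hprime y hy)).1 hxy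
    exact (mem_erase.1 (hB hy)).1 hxy.symm
  rw [← hf x hxn _ hbn, Pi.le_def, not_forall] at hxb
  obtain ⟨c, hc⟩ := hxb
  refine ⟨c, fun y hy => lt_of_le_of_lt ?_ (not_le.1 hc)⟩
  have hyn : y ∈ Set.Icc 1 n := ⟨(hprime y hy).one_lt.le, (hBz y hy).trans hz⟩
  exact (hf y hyn _ hbn).2 (dvd_prod_of_mem _ hy) c

lemma exists_divisibility_embedding (n : ℕ) :
    ∃ f : ℕ → Fin n → ℝ, ∀ a ∈ Set.Icc 1 n, ∀ b ∈ Set.Icc 1 n, (f a ≤ f b ↔ a ∣ b) := by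
  refine ⟨fun a i => if (i : ℕ) + 1 ∣ a then 1 else 0, fun a ⟨ha1, han⟩ b _ => ⟨fun h => ?_, ?_⟩⟩
  · have := h ⟨a - 1, by omega⟩
    simp only [Nat.sub_add_cancel ha1, dvd_refl, if_true] at this
    by_contra hab
    norm_num [hab] at this
  · intro hab i
    dsimp only
    split_ifs with h1 h2 <;> first | exact absurd (h1.trans hab) h2 | norm_num

lemma exists_embedding_divDim {S : Set ℕ} {d : ℕ}
    (h : ∃ f : ℕ → Fin d → ℝ, ∀ a ∈ S, ∀ b ∈ S, (f a ≤ f b ↔ a ∣ b)) :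
    ∃ f : ℕ → Fin (divDim S) → ℝ, ∀ a ∈ S, ∀ b ∈ S, (f a ≤ f b ↔ a ∣ b) :=
  Nat.sInf_mem (s := {d | ∃ f : ℕ → Fin d → ℝ, ∀ a ∈ S, ∀ b ∈ S, (f a ≤ f b ↔ a ∣ b)}) ⟨d, h⟩

theorem mul_self_add_one_le_divDim_Icc {n z j : ℕ} (hj : 2 ≤ j) (hπ : j * j ≤ π z)
    (hzn : z ^ (2 * j - 2) ≤ n) : j * j + 1 ≤ divDim (Set.Icc 1 n) + j := by
  obtain ⟨f, hf⟩ := exists_embedding_divDim (exists_divisibility_embedding n)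
  have hP : j * j ≤ #(Nat.primesLE z) := by rwa [Nat.primesLE_card_eq_primeCounting]
  simpa using (isSuitable_primesLE (by omega) hzn hf).mul_self_add_one_le (by omega) hP

end Divisibility

section Asymptotics

lemma div_four_mul_log_le_primeCounting {x : ℝ} (hx : 100 ≤ x) : x / (4 * log x) ≤ π ⌊x⌋₊ := by
  have hlog : 0 < log x := log_pos (by linarith)
  refine le_trans ?_ (Chebyshev.pi_ge' (by linarith))
  rw [show x / (4 * log x) = x / 4 / log x by ring]
  refine div_le_div_of_nonneg_right ?_ hlog.le
  have hlog2 : 1 / 2 < log 2 := by have := log_two_gt_d9; linarith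
  set t := √(x + 2)
  have ht : t ^ 2 = x + 2 := sq_sqrt (by linarith)
  have ht10 : 10 ≤ t := le_sqrt_of_sq_le (by linarith)
  have hlog_sqrt : log (x + 2) ≤ 2 * (t - 1) := by
    have := log_le_sub_one_of_pos (show 0 < t by linarith)
    rw [log_sqrt (by linarith)] at this
    linarith
  nlinarith

lemma tendsto_div_log_atTop : Tendsto (fun x : ℝ => x / log x) atTop atTop :=
  ((tendsto_exp_div_pow_atTop 1).comp tendsto_log_atTop).congr' <| by
    filter_upwards [eventually_gt_atTop 0] with x hx
    simp [exp_log hx]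

lemma one_le_log_of_three_le {x : ℝ} (hx : 3 ≤ x) : 1 ≤ log x :=
  (le_log_iff_exp_le (by linarith)).2 (by linarith [exp_one_lt_d9])

lemma mul_self_le_primeCounting_floor_sq {L : ℝ} {j : ℕ} (hL : 10 ≤ L) (hA : 10 ≤ L / log L)
    (hj : (j : ℝ) < L / log L / 4 + 1) : j * j ≤ π ⌊L ^ 2⌋₊ := by
  have hℓ := one_le_log_of_three_le (by linarith : 3 ≤ L)
  have hπ := div_four_mul_log_le_primeCounting (x := L ^ 2) (by nlinarith)
  rw [log_pow, Nat.cast_ofNat] at hπ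
  have : (j : ℝ) * j ≤ π ⌊L ^ 2⌋₊ := calc
    (j : ℝ) * j ≤ (L / log L / 4 + 1) ^ 2 := by nlinarith [(j.cast_nonneg : (0 : ℝ) ≤ j)]
    _ ≤ (L / log L) ^ 2 / 8 := by nlinarith
    _ = L ^ 2 / (8 * log L ^ 2) := by field_simp
    _ ≤ L ^ 2 / (4 * (2 * log L)) :=
      div_le_div_of_nonneg_left (by positivity) (by positivity) (by nlinarith)
    _ ≤ π ⌊L ^ 2⌋₊ := hπ
  exact_mod_cast this

lemma floor_log_sq_pow_le {n j : ℕ} (hL : 10 ≤ log n) (hj : 1 ≤ j)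
    (hjA : (j : ℝ) < log n / log (log n) / 4 + 1) : ⌊log n ^ 2⌋₊ ^ (2 * j - 2) ≤ n := by
  set L := log n
  set z := ⌊L ^ 2⌋₊
  have hℓ := one_le_log_of_three_le (by linarith : 3 ≤ L)
  have hn : (0 : ℝ) < n := by
    rcases Nat.eq_zero_or_pos n with h | h
    · simp [L, h] at hL; linarith
    · exact_mod_cast h
  have hz1 : (1 : ℝ) ≤ z := by exact_mod_cast Nat.floor_pos.2 (by nlinarith)
  have hexp : ((2 * j - 2 : ℕ) : ℝ) ≤ L / log L / 2 := by
    rw [Nat.cast_sub (by omega)]; push_cast; linarith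
  have hlogz : log z ≤ 2 * log L := by
    calc log z ≤ log (L ^ 2) := log_le_log (by linarith) (Nat.floor_le (by positivity))
      _ = 2 * log L := by rw [log_pow, Nat.cast_ofNat]
  have hlog_pow : ((2 * j - 2 : ℕ) : ℝ) * log z ≤ L := calc
    _ ≤ (L / log L / 2) * (2 * log L) := mul_le_mul hexp hlogz (log_nonneg hz1) (by positivity)
    _ = L := by field_simp
  have : (z : ℝ) ^ (2 * j - 2) ≤ n := by
    rw [← log_le_log_iff (by positivity) hn, log_pow]
    exact hlog_pow
  exact_mod_cast this

lemma le_divDim_Icc_of_log {n : ℕ} {ε : ℝ} (hL : 10 ≤ log n) (hA : 10 ≤ log n / log (log n))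
    (hεA : 1 ≤ 4 * ε * (log n / log (log n))) :
    (1 / 16 - ε) * log n ^ 2 / log (log n) ^ 2 ≤ divDim (Set.Icc 1 n) := by
  set A := log n / log (log n)
  set j := ⌈A / 4⌉₊
  have hj_ge : A / 4 ≤ j := Nat.le_ceil _
  have hj_lt : (j : ℝ) < A / 4 + 1 := Nat.ceil_lt_add_one (by positivity)
  have hj : 2 ≤ j := by
    have : (1 : ℝ) < j := by linarith
    exact_mod_cast this
  have hdim : (j : ℝ) * j + 1 ≤ divDim (Set.Icc 1 n) + j := by
    exact_mod_cast mul_self_add_one_le_divDim_Icc hj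
      (mul_self_le_primeCounting_floor_sq hL hA hj_lt) (floor_log_sq_pow_le hL (by omega) hj_lt)
  calc (1 / 16 - ε) * log n ^ 2 / log (log n) ^ 2 = (1 / 16 - ε) * A ^ 2 := by
        rw [div_pow]; ring
    _ ≤ (j : ℝ) * j + 1 - j := by
      nlinarith [mul_nonneg (sub_nonneg.2 hj_ge) (show (0 : ℝ) ≤ j + A / 4 - 1 by linarith)]
    _ ≤ divDim (Set.Icc 1 n) := by linarith

end Asymptotics

/-- Lower bound: `dim(D_{[n]}) ≥ (1/16 - ε) (log n)² / (log log n)²` for large `n`. -/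
theorem divDim_Icc_lower_bound :
    ∀ ε : ℝ, 0 < ε → ∃ N : ℕ, ∀ n : ℕ, N ≤ n →
      (1 / 16 - ε) * (Real.log n) ^ 2 / (Real.log (Real.log n)) ^ 2
        ≤ (divDim (Set.Icc 1 n) : ℝ) := by
  intro ε hε
  have hlog : Tendsto (fun n : ℕ => log n) atTop atTop :=
    tendsto_log_atTop.comp tendsto_natCast_atTop_atTop
  have hlarge : ∀ᶠ L in atTop, 10 ≤ L ∧ max 10 (1 / (4 * ε)) ≤ L / log L :=
    (eventually_ge_atTop 10).and (tendsto_div_log_atTop.eventually_ge_atTop _)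
  obtain ⟨N, hN⟩ := eventually_atTop.1 (hlog.eventually hlarge)
  refine ⟨N, fun n hn => ?_⟩
  obtain ⟨hL, hA⟩ := hN n hn
  refine le_divDim_Icc_of_log hL (le_of_max_le_left hA) ?_
  have := (div_le_iff₀ (by positivity)).1 (le_of_max_le_right hA)
  linarith
end

section
/- For every ε > 0 there exists N such that for all n ≥ N, the Dushnik–Miller dimension of the divisibility poset on {1,…,n} is at most (4 + ε)·(log n)²/(log log n). -/
open Finset Real

theorem exists_forall_exists_of_card_filter_not_le {Ω β : Type*} [Fintype Ω] [Nonempty Ω]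
    [Fintype β] (P : β → Ω → Prop) [∀ j, DecidablePred (P j)] {D : ℕ} {r : ℝ}
    (hr : ∀ j, (#{ω | ¬P j ω} : ℝ) ≤ r * Fintype.card Ω)
    (hD : Fintype.card β * r ^ D < 1) :
    ∃ W : Fin D → Ω, ∀ j, ∃ d, P j (W d) := by
  classical
  by_contra! h
  have hcover : (univ : Finset (Fin D → Ω)) ⊆
      univ.biUnion fun j => Fintype.piFinset fun _ => {ω | ¬P j ω} := by
    intro W _
    obtain ⟨j, hj⟩ := h W
    simpa using ⟨j, hj⟩
  have hcard : (Fintype.card Ω : ℝ) ^ D ≤ ∑ j, (#{ω | ¬P j ω} : ℝ) ^ D := by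
    have := (card_le_card hcover).trans card_biUnion_le
    simp only [card_univ, Fintype.card_fun, Fintype.card_fin, Fintype.card_piFinset,
      prod_const] at this
    exact_mod_cast this
  have hpos : (0 : ℝ) < Fintype.card Ω ^ D := by positivity
  have : (Fintype.card Ω : ℝ) ^ D < Fintype.card Ω ^ D := calc
    _ ≤ ∑ j, (#{ω | ¬P j ω} : ℝ) ^ D := hcard
    _ ≤ ∑ _j : β, (r * Fintype.card Ω) ^ D :=
      sum_le_sum fun j _ => pow_le_pow_left₀ (Nat.cast_nonneg _) (hr j) D
    _ = (Fintype.card β * r ^ D) * Fintype.card Ω ^ D := by simp [mul_pow, mul_assoc]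
    _ < 1 * Fintype.card Ω ^ D := mul_lt_mul_of_pos_right hD hpos
    _ = _ := one_mul _
  exact lt_irrefl _ this

theorem card_filter_apply_eq_zero_and_forall_ne_zero {ι : Type*} [Fintype ι] [DecidableEq ι]
    (c : ℕ) {p : ι} {T : Finset ι} (hp : p ∉ T) :
    #{ω : ι → Fin (c + 1) | ω p = 0 ∧ ∀ q ∈ T, ω q ≠ 0} =
      c ^ #T * (c + 1) ^ (Fintype.card ι - 1 - #T) := by
  let t : ι → Finset (Fin (c + 1)) := fun i =>
    if i = p then {0} else if i ∈ T then {0}ᶜ else univ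
  have hfilter : ({ω | ω p = 0 ∧ ∀ q ∈ T, ω q ≠ 0} : Finset (ι → Fin (c + 1))) =
      Fintype.piFinset t := by
    ext ω
    simp only [mem_filter, mem_univ, true_and, Fintype.mem_piFinset, t]
    constructor
    · rintro ⟨hp0, hT⟩ i
      split_ifs with hip hiT
      · simpa [hip]
      · simpa using hT i hiT
      · exact mem_univ _
    · intro h
      refine ⟨by simpa using h p, fun q hq => ?_⟩
      have hqp : q ≠ p := fun hqp => hp (hqp ▸ hq)
      simpa [hqp, hq] using h q
  have hcompl : p ∈ Tᶜ := mem_compl.2 hp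
  rw [hfilter, Fintype.card_piFinset, ← prod_mul_prod_compl T,
    prod_eq_mul_prod_sdiff_singleton_of_mem hcompl]
  have hT : ∀ i ∈ T, #(t i) = c := fun i hi => by
    have hip : i ≠ p := fun hip => hp (hip ▸ hi)
    simp [t, hip, hi, card_compl]
  have hrest : ∀ i ∈ Tᶜ \ {p}, #(t i) = c + 1 := fun i hi => by
    simp only [mem_sdiff, mem_compl, mem_singleton] at hi
    simp [t, hi.1, hi.2]
  rw [prod_congr rfl hT, prod_congr rfl hrest, prod_const, prod_const,
    card_sdiff_of_subset (singleton_subset_iff.2 hcompl), card_compl]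
  simp [t, Nat.sub_right_comm _ 1]

theorem add_one_pow_le_exp_one_mul_pow {m t : ℕ} (ht : t ≤ m) :
    ((m : ℝ) + 1) ^ t ≤ exp 1 * (m : ℝ) ^ t := by
  rcases Nat.eq_zero_or_pos m with rfl | hm
  · obtain rfl : t = 0 := by omega
    simp
  have hm' : (0 : ℝ) < m := by exact_mod_cast hm
  calc ((m : ℝ) + 1) ^ t = (1 + (m : ℝ)⁻¹) ^ t * (m : ℝ) ^ t := by
        rw [← mul_pow, add_mul, inv_mul_cancel₀ hm'.ne', one_mul, add_comm]
    _ ≤ (1 + (m : ℝ)⁻¹) ^ m * (m : ℝ) ^ t := by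
        gcongr
        · exact le_add_of_nonneg_right (by positivity)
    _ ≤ exp 1 * (m : ℝ) ^ t := by gcongr; exact one_add_inv_pow_le_exp

theorem card_filter_not_apply_eq_zero_and_forall_ne_zero_le {ι : Type*} [Fintype ι]
    [DecidableEq ι] {m : ℕ} {p : ι} {T : Finset ι} (hp : p ∉ T) (hT : #T ≤ m) :
    (#{ω : ι → Fin (m + 1) | ¬(ω p = 0 ∧ ∀ q ∈ T, ω q ≠ 0)} : ℝ) ≤
      (1 - (exp 1 * (m + 1))⁻¹) * Fintype.card (ι → Fin (m + 1)) := by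
  have hTι : #T < Fintype.card ι := card_lt_univ_of_notMem hp
  have hsplit := card_filter_add_card_filter_not (s := (univ : Finset (ι → Fin (m + 1))))
    (fun ω => ω p = 0 ∧ ∀ q ∈ T, ω q ≠ 0)
  rw [card_filter_apply_eq_zero_and_forall_ne_zero m hp, card_univ, Fintype.card_fun,
    Fintype.card_fin] at hsplit
  have hgood : ((m : ℝ) + 1) ^ Fintype.card ι ≤
      exp 1 * (m + 1) * (m ^ #T * (m + 1) ^ (Fintype.card ι - 1 - #T)) := calc
    ((m : ℝ) + 1) ^ Fintype.card ι
        = (m + 1) * ((m + 1) ^ #T * (m + 1) ^ (Fintype.card ι - 1 - #T)) := by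
      rw [← pow_add, ← pow_succ']; congr 1; omega
    _ ≤ (m + 1) * ((exp 1 * m ^ #T) * (m + 1) ^ (Fintype.card ι - 1 - #T)) := by
      gcongr; exact add_one_pow_le_exp_one_mul_pow hT
    _ = _ := by ring
  have hsplit' : (#{ω : ι → Fin (m + 1) | ¬(ω p = 0 ∧ ∀ q ∈ T, ω q ≠ 0)} : ℝ) =
      (m + 1) ^ Fintype.card ι - m ^ #T * (m + 1) ^ (Fintype.card ι - 1 - #T) := by
    rw [eq_sub_iff_add_eq']; exact_mod_cast hsplit
  rw [hsplit', Fintype.card_fun, Fintype.card_fin, sub_mul, one_mul]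
  push_cast
  have := (inv_mul_le_iff₀ (by positivity : 0 < exp 1 * ((m : ℝ) + 1))).2 hgood
  linarith

theorem exists_finset_mem_and_disjoint {ι β : Type*} [Fintype ι] [DecidableEq ι] [Fintype β]
    {m D : ℕ} (p : β → ι) (T : β → Finset ι) (hpT : ∀ j, p j ∉ T j)
    (hT : ∀ j, #(T j) ≤ m)
    (hD : (Fintype.card β : ℝ) < exp ((exp 1 * (m + 1))⁻¹ * D)) :
    ∃ A : Fin D → Finset ι, ∀ j, ∃ d, p j ∈ A d ∧ Disjoint (A d) (T j) := by
  set δ : ℝ := (exp 1 * (m + 1))⁻¹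
  have hunion : Fintype.card β * (1 - δ) ^ D < 1 := calc
    Fintype.card β * (1 - δ) ^ D ≤ Fintype.card β * exp (-δ) ^ D := by
      have hδ1 : δ ≤ 1 := inv_le_one_of_one_le₀ <| one_le_mul_of_one_le_of_one_le
        (one_le_exp zero_le_one) (le_add_of_nonneg_left m.cast_nonneg)
      gcongr
      exact one_sub_le_exp_neg δ
    _ = Fintype.card β * exp (-(δ * D)) := by rw [← exp_nat_mul]; ring_nf
    _ < exp (δ * D) * exp (-(δ * D)) := by gcongr
    _ = 1 := by rw [← exp_add, add_neg_cancel, exp_zero]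
  obtain ⟨W, hW⟩ := exists_forall_exists_of_card_filter_not_le
    (fun j (ω : ι → Fin (m + 1)) => ω (p j) = 0 ∧ ∀ q ∈ T j, ω q ≠ 0)
    (fun j => card_filter_not_apply_eq_zero_and_forall_ne_zero_le (hpT j) (hT j)) hunion
  refine ⟨fun d => {i | W d i = 0}, fun j => ?_⟩
  obtain ⟨d, hp0, hT0⟩ := hW j
  exact ⟨d, by simpa using hp0, disjoint_left.2 fun i hi hiT => hT0 i hiT (by simpa using hi)⟩

theorem Nat.card_filter_le_primeFactors_le_log {B b : ℕ} (hB : 1 < B) :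
    #{p ∈ b.primeFactors | B ≤ p} ≤ Nat.log B b := by
  rcases eq_or_ne b 0 with rfl | hb
  · simp
  refine Nat.le_log_of_pow_le hB ?_
  calc B ^ #{p ∈ b.primeFactors | B ≤ p} ≤ ∏ p ∈ b.primeFactors with B ≤ p, p :=
        pow_card_le_prod _ _ _ fun p hp => (mem_filter.1 hp).2
    _ ≤ b := Nat.le_of_dvd (Nat.pos_of_ne_zero hb) <|
        (prod_dvd_prod_of_subset _ _ _ (filter_subset _ _)).trans (Nat.prod_primeFactors_dvd b)

theorem Nat.dvd_iff_forall_sum_factorization_le {κ : Type*} (S : κ → Finset ℕ) {a b : ℕ}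
    (ha : a ≠ 0) (hb : b ≠ 0)
    (hS : ∀ p ∈ a.primeFactors,
      ∃ k, p ∈ S k ∧ ∀ q ∈ S k, q ∈ b.primeFactors → q = p) :
    a ∣ b ↔ ∀ k, ∑ q ∈ S k, a.factorization q ≤ ∑ q ∈ S k, b.factorization q := by
  rw [← Nat.factorization_le_iff_dvd ha hb]
  refine ⟨fun h k => sum_le_sum fun q _ => h q, fun h => ?_⟩
  by_contra hab
  obtain ⟨p, hp⟩ := not_forall.1 hab
  have hpa : p ∈ a.primeFactors := by
    rw [← Nat.support_factorization, Finsupp.mem_support_iff]; omega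
  obtain ⟨k, hpk, hk⟩ := hS p hpa
  have hbk : ∑ q ∈ S k, b.factorization q = b.factorization p :=
    sum_eq_single_of_mem p hpk fun q hq hqp => by
      by_contra hq0
      exact hqp <| hk q hq <| by
        rw [← Nat.support_factorization]; exact Finsupp.mem_support_iff.2 hq0
  have hak : a.factorization p ≤ ∑ q ∈ S k, a.factorization q :=
    single_le_sum (fun q _ => Nat.zero_le _) hpk
  have := h k
  omega

theorem divDim_le_card {S : Set ℕ} {κ : Type*} [Fintype κ] (g : κ → ℕ → ℕ)
    (hg : ∀ a ∈ S, ∀ b ∈ S, a ∣ b ↔ ∀ k, g k a ≤ g k b) :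
    divDim S ≤ Fintype.card κ := by
  let e := Fintype.equivFin κ
  refine Nat.sInf_le ⟨fun x i => g (e.symm i) x, fun a ha b hb => ?_⟩
  rw [hg a ha b hb, Pi.le_def, e.symm.forall_congr_left]
  simp

theorem divDim_Icc_le_card_of_isolating {n : ℕ} {κ : Type*} [Fintype κ] (C : κ → Finset ℕ)
    (hC : ∀ b ∈ Set.Icc 1 n, ∀ p ≤ n,
      ∃ k, p ∈ C k ∧ ∀ q ∈ C k, q ∈ b.primeFactors → q = p) :
    divDim (Set.Icc 1 n) ≤ Fintype.card κ :=
  divDim_le_card (fun k x => ∑ q ∈ C k, x.factorization q) fun a ha b hb =>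
    Nat.dvd_iff_forall_sum_factorization_le C (by grind) (by grind) fun p hp =>
      hC b hb p ((Nat.le_of_mem_primeFactors hp).trans ha.2)

theorem divDim_Icc_le {n B D : ℕ} (hB : 1 < B)
    (hD : exp 1 * (Nat.log B n + 1) * (2 * log n) < D) :
    divDim (Set.Icc 1 n) ≤ B + D := by
  let ι := ↥(Finset.Icc B n)
  let T : ↥(Finset.Icc 1 n) × ι → Finset ι := fun j =>
    (j.1.1.primeFactors.erase j.2).subtype (· ∈ Finset.Icc B n)
  have hT : ∀ j, #(T j) ≤ Nat.log B n := fun j => by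
    obtain ⟨⟨b, hb⟩, p⟩ := j
    calc #(T (⟨b, hb⟩, p)) ≤ #{q ∈ b.primeFactors | B ≤ q} := by
          rw [card_subtype]
          exact card_le_card fun q hq => by simp at hq ⊢; tauto
      _ ≤ Nat.log B b := Nat.card_filter_le_primeFactors_le_log hB
      _ ≤ Nat.log B n := Nat.log_mono_right (mem_Icc.1 hb).2
  have hcard : (Fintype.card (↥(Finset.Icc 1 n) × ι) : ℝ) <
      exp ((exp 1 * (Nat.log B n + 1))⁻¹ * D) := calc
    (Fintype.card (↥(Finset.Icc 1 n) × ι) : ℝ) ≤ (n : ℝ) ^ 2 := by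
      norm_cast
      simp only [Fintype.card_prod, Fintype.card_coe, Nat.card_Icc, sq, ι]
      gcongr <;> omega
    _ ≤ exp (log n) ^ 2 := by gcongr; exact le_exp_log _
    _ = exp (2 * log n) := by rw [← exp_nat_mul]; norm_num
    _ < exp ((exp 1 * (Nat.log B n + 1))⁻¹ * D) :=
      exp_lt_exp.2 ((lt_inv_mul_iff₀ (by positivity)).2 hD)
  obtain ⟨A, hA⟩ := exists_finset_mem_and_disjoint (fun j => j.2) T
    (fun j => by rw [mem_subtype]; simp) hT hcard
  let C : Fin B ⊕ Fin D → Finset ℕ :=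
    Sum.elim (fun i => {(i : ℕ)}) (fun d => (A d).map (Function.Embedding.subtype _))
  have hC : ∀ b ∈ Set.Icc 1 n, ∀ p ≤ n,
      ∃ k, p ∈ C k ∧ ∀ q ∈ C k, q ∈ b.primeFactors → q = p := by
    intro b hb p hpn
    rcases lt_or_ge p B with hpB | hpB
    · exact ⟨.inl ⟨p, hpB⟩, by simp [C], by simp [C]⟩
    obtain ⟨d, hpd, hdisj⟩ := hA (⟨b, by simpa using hb⟩, ⟨p, mem_Icc.2 ⟨hpB, hpn⟩⟩)
    refine ⟨.inr d, by simpa [C] using ⟨⟨hpB, hpn⟩, hpd⟩, fun q hq hqb => ?_⟩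
    simp only [C, Sum.elim_inr, mem_map, Function.Embedding.coe_subtype] at hq
    obtain ⟨q, hqd, rfl⟩ := hq
    by_contra hqp
    exact disjoint_left.1 hdisj hqd (by rw [mem_subtype]; exact mem_erase.2 ⟨hqp, hqb⟩)
  simpa [C] using divDim_Icc_le_card_of_isolating C hC

theorem divDim_Icc_le_log {n : ℕ} (hn : 3 ≤ n) :
    (divDim (Set.Icc 1 n) : ℝ) ≤
      log n ^ (3 / 2 : ℝ) + 2 + exp 1 * (2 / 3 * (log n / log (log n)) + 1) * (2 * log n) := by
  set L := log n
  have hL : 1 < L := (lt_log_iff_exp_lt (by positivity)).2 <|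
    exp_one_lt_three.trans_le (by exact_mod_cast hn)
  have hlogL : 0 < log L := log_pos hL
  set B := ⌈L ^ (3 / 2 : ℝ)⌉₊
  set m := Nat.log B n
  have hB : 1 < B := Nat.lt_ceil.2 <| by
    exact_mod_cast one_lt_rpow hL (by norm_num : (0 : ℝ) < 3 / 2)
  have hm : (m : ℝ) ≤ 2 / 3 * (L / log L) := by
    have hBm : (m : ℝ) * log B ≤ L := by
      rw [← log_pow]
      exact log_le_log (by positivity) (by exact_mod_cast Nat.pow_log_le_self B (by omega))
    have hlogB : 3 / 2 * log L ≤ log B := by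
      rw [← log_rpow (by positivity : (0 : ℝ) < L)]
      exact log_le_log (by positivity) (Nat.le_ceil _)
    rw [show 2 / 3 * (L / log L) = L / (3 / 2 * log L) by field_simp, le_div_iff₀ (by positivity)]
    nlinarith [m.cast_nonneg (α := ℝ)]
  have hdim : divDim (Set.Icc 1 n) ≤ B + (⌊exp 1 * (m + 1) * (2 * L)⌋₊ + 1) :=
    divDim_Icc_le hB (by exact_mod_cast Nat.lt_floor_add_one (exp 1 * (m + 1) * (2 * L)))
  calc (divDim (Set.Icc 1 n) : ℝ)
      ≤ B + (⌊exp 1 * (m + 1) * (2 * L)⌋₊ + 1 : ℕ) := by exact_mod_cast hdim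
    _ ≤ (L ^ (3 / 2 : ℝ) + 1) + (exp 1 * (m + 1) * (2 * L) + 1) := by
      push_cast
      gcongr
      · exact (Nat.ceil_lt_add_one (by positivity)).le
      · exact Nat.floor_le (by positivity)
    _ ≤ _ := by
      have : exp 1 * (m + 1) * (2 * L) ≤ exp 1 * (2 / 3 * (L / log L) + 1) * (2 * L) := by
        gcongr
      linarith

open Filter

theorem eventually_rpow_add_le_div_log {ε : ℝ} (hε : 0 < ε) :
    ∀ᶠ x : ℝ in atTop, x ^ (3 / 2 : ℝ) + 2 + exp 1 * (2 / 3 * (x / log x) + 1) * (2 * x) ≤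
      (4 + ε) * x ^ 2 / log x := by
  set c := 4 + ε - 4 / 3 * exp 1
  have hc : 0 < c := by simp only [c]; linarith [exp_one_lt_three]
  filter_upwards [eventually_gt_atTop 1,
    (isLittleO_log_rpow_atTop (by norm_num : (0 : ℝ) < 1 / 2)).def (by positivity : 0 < c / 9)]
    with x hx hlog
  have hx0 : 0 < x := by linarith
  have hlogx : 0 < log x := log_pos hx
  rw [norm_of_nonneg hlogx.le, norm_of_nonneg (by positivity)] at hlog
  have hx32 : x ≤ x ^ (3 / 2 : ℝ) := self_le_rpow_of_one_le hx.le (by norm_num)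
  have hlower : (x ^ (3 / 2 : ℝ) + 2 + 2 * exp 1 * x) * log x ≤ c * x ^ 2 := calc
    _ ≤ 9 * x ^ (3 / 2 : ℝ) * log x := by
      gcongr
      nlinarith [exp_one_lt_three, exp_pos 1]
    _ ≤ 9 * x ^ (3 / 2 : ℝ) * (c / 9 * x ^ (1 / 2 : ℝ)) := by gcongr
    _ = c * x ^ 2 := by
      rw [mul_mul_mul_comm, mul_div_cancel₀ _ (by norm_num : (9 : ℝ) ≠ 0), ← rpow_add hx0]
      norm_num
  calc x ^ (3 / 2 : ℝ) + 2 + exp 1 * (2 / 3 * (x / log x) + 1) * (2 * x)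
      = (x ^ (3 / 2 : ℝ) + 2 + 2 * exp 1 * x) + 4 / 3 * exp 1 * x ^ 2 / log x := by
        field_simp; ring
    _ ≤ c * x ^ 2 / log x + 4 / 3 * exp 1 * x ^ 2 / log x := by
        gcongr; exact (le_div_iff₀ hlogx).2 hlower
    _ = (4 + ε) * x ^ 2 / log x := by simp only [c]; ring

/-- Upper bound: `dim(D_{[n]}) ≤ (4 + ε) (log n)² / log log n` for large `n`. -/
theorem divDim_Icc_upper_bound :
    ∀ ε : ℝ, 0 < ε → ∃ N : ℕ, ∀ n : ℕ, N ≤ n →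
      (divDim (Set.Icc 1 n) : ℝ)
        ≤ (4 + ε) * (Real.log n) ^ 2 / Real.log (Real.log n) := by
  intro ε hε
  have hlog : Tendsto (fun n : ℕ => log n) atTop atTop :=
    tendsto_log_atTop.comp tendsto_natCast_atTop_atTop
  obtain ⟨N, hN⟩ := eventually_atTop.1 <|
    (eventually_ge_atTop 3).and (hlog.eventually (eventually_rpow_add_le_div_log hε))
  exact ⟨N, fun n hn => (divDim_Icc_le_log (hN n hn).1).trans (hN n hn).2⟩
end

section
/- For every ε > 0 there exists N such that for all n ≥ N, the 2-dimension of the divisibility poset on {1,…,n} is at least (1/16 − ε)·(log n)²/(log log n)². -/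
/-- The 2-dimension of the divisibility poset on a set `S ⊆ ℕ`:
the least `d` such that there is an order embedding of `(S, ∣)` into the
powerset of `{1, …, d}` ordered by inclusion. -/
noncomputable def divDim2 (S : Set ℕ) : ℕ :=
  sInf {d : ℕ | ∃ f : ℕ → Finset (Fin d), ∀ a ∈ S, ∀ b ∈ S, (f a ⊆ f b ↔ a ∣ b)}

open Finset

namespace DivDim2LowerBound

/-- Helper sequence: `bas k ≈ k²/2`, a Bassalygo-type bound for cover-free families. -/
def bas : ℕ → ℕ
  | 0 => 0
  | 1 => 2
  | (n+2) => bas (n+1) + (n+3)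

lemma sq_le_two_mul_bas : ∀ k : ℕ, k ^ 2 ≤ 2 * bas k
  | 0 => by simp [bas]
  | 1 => by simp [bas]
  | (n+2) => by
      have h := sq_le_two_mul_bas (n+1)
      simp only [bas]
      nlinarith [h]

lemma bas_le_sq : ∀ k : ℕ, bas k ≤ (k+2)^2
  | 0 => by simp [bas]
  | 1 => by simp [bas]
  | (n+2) => by
      have h := bas_le_sq (n+1)
      simp only [bas]
      nlinarith [h]

variable {α : Type*} [DecidableEq α]

/-- Bassalygo's bound: a `k`-cover-free family of `N` nonempty finite sets needs a
ground set of at least `min N (bas k)` elements. -/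
lemma bassalygo_aux (N : ℕ) : ∀ (k : ℕ) (F : Finset (Finset α)), F.card ≤ N → ∅ ∉ F →
    (∀ A ∈ F, ∀ S ⊆ F.erase A, S.card ≤ k → ¬ A ⊆ S.sup id) →
    min F.card (bas k) ≤ (F.sup id).card := by
  induction N with
  | zero =>
    intro k F hcard _ _
    simp only [Nat.le_zero] at hcard
    simp [hcard]
  | succ N ih =>
    intro k F hcard hempty hcf
    rcases eq_or_ne F ∅ with rfl | hFne
    · simp
    obtain ⟨C, hC, hCmin⟩ := F.exists_min_image Finset.card (nonempty_of_ne_empty hFne)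
    match k with
    | 0 => simp [bas]
    | 1 =>
      rcases lt_or_ge F.card 2 with h2 | h2
      · have h1 : 1 ≤ F.card := Finset.card_pos.mpr (nonempty_of_ne_empty hFne)
        have hCne : C ≠ ∅ := fun h => hempty (h ▸ hC)
        obtain ⟨a, ha⟩ := nonempty_of_ne_empty hCne
        have : a ∈ F.sup id := mem_sup.mpr ⟨C, hC, ha⟩
        have : 1 ≤ (F.sup id).card := Finset.card_pos.mpr ⟨a, this⟩
        omega
      · obtain ⟨A, hA, B, hB, hAB⟩ := Finset.one_lt_card.mp h2
        have hnAB : ¬ A ⊆ B := by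
          have := hcf A hA {B} (by simp [Finset.singleton_subset_iff, Finset.mem_erase, hAB.symm, hB])
            (by simp)
          simpa using this
        have hnBA : ¬ B ⊆ A := by
          have := hcf B hB {A} (by simp [Finset.singleton_subset_iff, Finset.mem_erase, hAB, hA])
            (by simp)
          simpa using this
        obtain ⟨a, haA, haB⟩ := Finset.not_subset.mp hnAB
        obtain ⟨b, hbB, hbA⟩ := Finset.not_subset.mp hnBA
        have ha : a ∈ F.sup id := mem_sup.mpr ⟨A, hA, haA⟩
        have hb : b ∈ F.sup id := mem_sup.mpr ⟨B, hB, hbB⟩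
        have hab : a ≠ b := fun h => haB (h ▸ hbB)
        have : 1 < (F.sup id).card := Finset.one_lt_card.mpr ⟨a, ha, b, hb, hab⟩
        simp only [bas]
        omega
    | (k'+2) =>
      set k := k' + 2 with hk
      rcases le_or_gt C.card k with hsmall | hbig
      · -- small code case : C has a private element
        have hpriv : ∃ x ∈ C, ∀ D ∈ F, D ≠ C → x ∉ D := by
          by_contra hcon
          push_neg at hcon
          choose g hgF hgne hgx using hcon
          set S : Finset (Finset α) := C.attach.image (fun x => g x.1 x.2) with hS
          have hSsub : S ⊆ F.erase C := by
            intro D hD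
            simp only [hS, Finset.mem_image] at hD
            obtain ⟨x, _, rfl⟩ := hD
            exact Finset.mem_erase.mpr ⟨hgne _ _, hgF _ _⟩
          have hScard : S.card ≤ k := by
            calc S.card ≤ C.attach.card := Finset.card_image_le
            _ = C.card := Finset.card_attach
            _ ≤ k := hsmall
          refine hcf C hC S hSsub hScard ?_
          intro x hx
          exact mem_sup.mpr ⟨g x hx, Finset.mem_image.mpr ⟨⟨x, hx⟩, Finset.mem_attach _ _, rfl⟩, hgx x hx⟩
        obtain ⟨x, hxC, hxpriv⟩ := hpriv
        set F₂ := F.erase C with hF₂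
        have hcf₂ : ∀ A ∈ F₂, ∀ S ⊆ F₂.erase A, S.card ≤ k → ¬ A ⊆ S.sup id := by
          intro A hA S hS hcard'
          refine hcf A (Finset.mem_of_mem_erase hA) S (hS.trans ?_) hcard'
          intro D hD
          simp only [Finset.mem_erase, hF₂] at hD ⊢
          exact ⟨hD.1, hD.2.2⟩
        have hsub : F₂.sup id ⊆ (F.sup id).erase x := by
          intro a ha
          obtain ⟨D, hD, haD⟩ := mem_sup.mp ha
          refine Finset.mem_erase.mpr ⟨?_, mem_sup.mpr ⟨D, Finset.mem_of_mem_erase hD, haD⟩⟩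
          rintro rfl
          exact hxpriv D (Finset.mem_of_mem_erase hD) (Finset.ne_of_mem_erase hD) haD
        have hxmem : x ∈ F.sup id := mem_sup.mpr ⟨C, hC, hxC⟩
        have hcard₂ : F₂.card = F.card - 1 := Finset.card_erase_of_mem hC
        have h1 : 1 ≤ F.card := Finset.card_pos.mpr (nonempty_of_ne_empty hFne)
        have hIH := ih k F₂ (by omega) (fun h => hempty (Finset.mem_of_mem_erase h)) hcf₂
        have hc1 := Finset.card_le_card hsub
        have hc2 : ((F.sup id).erase x).card = (F.sup id).card - 1 := Finset.card_erase_of_mem hxmem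
        have hc3 : 1 ≤ (F.sup id).card := Finset.card_pos.mpr ⟨x, hxmem⟩
        omega
      · -- big code case : every code has > k elements
        set F₂ := F.erase C with hF₂
        have hinj : ∀ A ∈ F₂, ∀ B ∈ F₂, A \ C = B \ C → A = B := by
          intro A hA B hB hABC
          by_contra hne
          have hsubAB : A ⊆ B ∪ C := by
            intro a ha
            rcases em (a ∈ C) with h | h
            · exact Finset.mem_union_right _ h
            · have : a ∈ A \ C := Finset.mem_sdiff.mpr ⟨ha, h⟩
              rw [hABC] at this
              exact Finset.mem_union_left _ (Finset.mem_sdiff.mp this).1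
          have hBA : B ≠ A := fun h => hne h.symm
          have hCA : C ≠ A := fun h => (Finset.ne_of_mem_erase hA) h.symm
          have hBC : B ≠ C := Finset.ne_of_mem_erase hB
          refine hcf A (Finset.mem_of_mem_erase hA) {B, C} ?_ ?_ ?_
          · intro D hD
            rcases Finset.mem_insert.mp hD with rfl | hD
            · exact Finset.mem_erase.mpr ⟨hBA, Finset.mem_of_mem_erase hB⟩
            · rw [Finset.mem_singleton.mp hD]
              exact Finset.mem_erase.mpr ⟨hCA, hC⟩
          · calc ({B, C} : Finset (Finset α)).card ≤ 2 := Finset.card_insert_le _ _ |>.trans (by simp)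
            _ ≤ k := by omega
          · rw [Finset.sup_insert, Finset.sup_singleton]
            exact hsubAB
        set F' := F₂.image (fun A => A \ C) with hF'
        have hcardF' : F'.card = F.card - 1 := by
          rw [hF', Finset.card_image_of_injOn hinj, Finset.card_erase_of_mem hC]
        have hemptyF' : ∅ ∉ F' := by
          intro h
          obtain ⟨A, hA, hAe⟩ := Finset.mem_image.mp h
          have hsubAC : A ⊆ C := by
            intro a ha
            by_contra hc
            have : a ∈ A \ C := Finset.mem_sdiff.mpr ⟨ha, hc⟩
            rw [hAe] at this
            exact absurd this (Finset.notMem_empty _)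
          refine hcf A (Finset.mem_of_mem_erase hA) {C}
            (by simp [Finset.singleton_subset_iff, Finset.mem_erase,
              (Finset.ne_of_mem_erase hA : A ≠ C).symm, hC]) (by simp; omega) ?_
          rw [Finset.sup_singleton]
          exact hsubAC
        have hcf' : ∀ A' ∈ F', ∀ S' ⊆ F'.erase A', S'.card ≤ (k'+1) → ¬ A' ⊆ S'.sup id := by
          intro A' hA' S' hS' hcard' hsubA'
          obtain ⟨A, hA, rfl⟩ := Finset.mem_image.mp hA'
          set T := F₂.filter (fun D => D \ C ∈ S' ∧ D ≠ A) with hT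
          have hTsub : T ⊆ F.erase A := by
            intro D hD
            simp only [hT, Finset.mem_filter] at hD
            exact Finset.mem_erase.mpr ⟨hD.2.2, Finset.mem_of_mem_erase hD.1⟩
          have hTS' : ∀ s ∈ S', ∃ D ∈ T, D \ C = s := by
            intro s hs
            have hsF' : s ∈ F' := Finset.mem_of_mem_erase (hS' hs)
            obtain ⟨D, hD, rfl⟩ := Finset.mem_image.mp hsF'
            refine ⟨D, ?_, rfl⟩
            simp only [hT, Finset.mem_filter]
            refine ⟨hD, hs, ?_⟩
            rintro rfl
            exact Finset.ne_of_mem_erase (hS' hs) rfl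
          have hTcard : T.card ≤ k' + 1 := by
            have himg : T.image (fun D => D \ C) ⊆ S' := by
              intro s hs
              obtain ⟨D, hD, rfl⟩ := Finset.mem_image.mp hs
              simp only [hT, Finset.mem_filter] at hD
              exact hD.2.1
            have : T.card = (T.image (fun D => D \ C)).card := by
              rw [Finset.card_image_of_injOn (fun x hx y hy h => hinj x
                (Finset.mem_filter.mp hx).1 y (Finset.mem_filter.mp hy).1 h)]
            rw [this]
            exact le_trans (Finset.card_le_card himg) hcard'
          have hCA : C ≠ A := fun h => (Finset.ne_of_mem_erase hA) h.symm
          refine hcf A (Finset.mem_of_mem_erase hA) (insert C T) ?_ ?_ ?_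
          · intro D hD
            rcases Finset.mem_insert.mp hD with rfl | hD
            · exact Finset.mem_erase.mpr ⟨hCA, hC⟩
            · exact hTsub hD
          · calc (insert C T).card ≤ T.card + 1 := Finset.card_insert_le _ _
            _ ≤ k := by omega
          · intro a ha
            rcases em (a ∈ C) with h | h
            · exact mem_sup.mpr ⟨C, Finset.mem_insert_self _ _, h⟩
            · have haAC : a ∈ A \ C := Finset.mem_sdiff.mpr ⟨ha, h⟩
              obtain ⟨s, hs, has⟩ := mem_sup.mp (hsubA' haAC)
              obtain ⟨D, hD, rfl⟩ := hTS' s hs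
              exact mem_sup.mpr ⟨D, Finset.mem_insert_of_mem hD, (Finset.mem_sdiff.mp has).1⟩
        have hIH := ih (k'+1) F' (by omega) hemptyF' hcf'
        have hdisj : Disjoint C (F'.sup id) := by
          rw [Finset.disjoint_right]
          intro a ha
          obtain ⟨s, hs, has⟩ := mem_sup.mp ha
          obtain ⟨D, _, rfl⟩ := Finset.mem_image.mp hs
          exact (Finset.mem_sdiff.mp has).2
        have hsubU : C ∪ F'.sup id ⊆ F.sup id := by
          intro a ha
          rcases Finset.mem_union.mp ha with h | h
          · exact mem_sup.mpr ⟨C, hC, h⟩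
          · obtain ⟨s, hs, has⟩ := mem_sup.mp h
            obtain ⟨D, hD, rfl⟩ := Finset.mem_image.mp hs
            exact mem_sup.mpr ⟨D, Finset.mem_of_mem_erase hD, (Finset.mem_sdiff.mp has).1⟩
        have hcardU : C.card + (F'.sup id).card ≤ (F.sup id).card := by
          rw [← Finset.card_union_of_disjoint hdisj]
          exact Finset.card_le_card hsubU
        have hbk : bas k = bas (k'+1) + (k'+3) := by simp [hk, bas]
        have h1 : 1 ≤ F.card := Finset.card_pos.mpr (nonempty_of_ne_empty hFne)
        omega

lemma bassalygo (k : ℕ) (F : Finset (Finset α)) (h1 : ∅ ∉ F)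
    (h2 : ∀ A ∈ F, ∀ S ⊆ F.erase A, S.card ≤ k → ¬ A ⊆ S.sup id) :
    min F.card (bas k) ≤ (F.sup id).card :=
  bassalygo_aux F.card k F le_rfl h1 h2

/-- Chebyshev-type bound: `4^u ≤ (2u) * (2u)^π(2u)`. -/
lemma cheb (u : ℕ) (hu : 1 ≤ u) :
    4 ^ u ≤ (2*u) * (2*u) ^ (((Finset.range (2*u+1)).filter Nat.Prime).card) := by
  have h1 : 4 ^ u ≤ 2 * u * Nat.centralBinom u :=
    Nat.four_pow_le_two_mul_self_mul_centralBinom u hu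
  have h2 : Nat.centralBinom u ≤ (2*u) ^ (((Finset.range (2*u+1)).filter Nat.Prime).card) := by
    have hne : Nat.centralBinom u ≠ 0 := (Nat.centralBinom_pos u).ne'
    conv_lhs => rw [← Nat.factorization_prod_pow_eq_self hne]
    rw [Finsupp.prod]
    have hsub : (Nat.centralBinom u).factorization.support ⊆
        (Finset.range (2*u+1)).filter Nat.Prime := by
      intro p hp
      have hpp : p.Prime := Nat.prime_of_mem_primeFactors (by rwa [← Nat.support_factorization])
      have hple : p ^ ((Nat.centralBinom u).factorization p) ≤ 2*u := by
        unfold Nat.centralBinom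
        exact Nat.pow_factorization_choose_le (by omega)
      have hpos : 1 ≤ (Nat.centralBinom u).factorization p := by
        rcases Nat.eq_zero_or_pos ((Nat.centralBinom u).factorization p) with h | h
        · exact absurd h (Finsupp.mem_support_iff.mp hp)
        · exact h
      have : p ≤ 2*u := le_trans (le_trans (Nat.le_self_pow (by omega) p)
        (Nat.pow_le_pow_right hpp.pos hpos)) hple
      simp only [Finset.mem_filter, Finset.mem_range]
      exact ⟨by omega, hpp⟩
    calc ∏ p ∈ (Nat.centralBinom u).factorization.support,
          p ^ ((Nat.centralBinom u).factorization p)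
        ≤ ∏ _p ∈ (Nat.centralBinom u).factorization.support, (2*u) := by
          apply Finset.prod_le_prod
          · intro i _; exact Nat.zero_le _
          · intro p hp
            unfold Nat.centralBinom
            exact Nat.pow_factorization_choose_le (by omega)
      _ = (2*u) ^ ((Nat.centralBinom u).factorization.support.card) := by
          rw [Finset.prod_const]
      _ ≤ (2*u) ^ (((Finset.range (2*u+1)).filter Nat.Prime).card) := by
          apply Nat.pow_le_pow_right (by omega)
          exact Finset.card_le_card hsub
  calc 4^u ≤ 2*u*Nat.centralBinom u := h1
    _ ≤ (2*u) * (2*u) ^ (((Finset.range (2*u+1)).filter Nat.Prime).card) :=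
        Nat.mul_le_mul_left _ h2

/-- If `(2u)^(m+1) < 4^u`, then there are more than `m` primes `≤ 2u`. -/
lemma primes_lower (u m : ℕ) (hu : 1 ≤ u)
    (h : (2*u) ^ (m+1) < 4 ^ u) :
    m < ((Finset.range (2*u+1)).filter Nat.Prime).card := by
  by_contra hc
  push_neg at hc
  have h1 := cheb u hu
  have h2 : (2*u) * (2*u) ^ (((Finset.range (2*u+1)).filter Nat.Prime).card) ≤ (2*u)^(m+1) := by
    calc (2*u) * (2*u) ^ (((Finset.range (2*u+1)).filter Nat.Prime).card)
        ≤ (2*u) * (2*u)^m := Nat.mul_le_mul_left _ (Nat.pow_le_pow_right (by omega) hc)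
      _ = (2*u)^(m+1) := by ring
  omega

/-- Reduction: an order embedding of `([1,n], ∣)` into `2^[d]` turns the primes `≤ y`
into a `k`-cover-free family, provided `y^k ≤ n`. -/
lemma reduction {n d y k : ℕ} (hk : 1 ≤ k) (hy : 1 ≤ y) (hn : 1 ≤ n) (hyk : y ^ k ≤ n)
    (f : ℕ → Finset (Fin d))
    (hf : ∀ a ∈ Set.Icc 1 n, ∀ b ∈ Set.Icc 1 n, (f a ⊆ f b ↔ a ∣ b)) :
    min ((Finset.range (y+1)).filter Nat.Prime).card (bas k) ≤ d := by
  set P := (Finset.range (y+1)).filter Nat.Prime with hP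
  have hyn : y ≤ n := le_trans (Nat.le_self_pow (by omega) y) hyk
  have hPmem : ∀ p ∈ P, p.Prime ∧ p ∈ Set.Icc 1 n := by
    intro p hp
    simp only [hP, Finset.mem_filter, Finset.mem_range] at hp
    exact ⟨hp.2, Set.mem_Icc.mpr ⟨hp.2.one_lt.le.trans' (by omega), by omega⟩⟩
  have h1mem : (1:ℕ) ∈ Set.Icc 1 n := Set.mem_Icc.mpr ⟨le_refl _, hn⟩
  have hinj : Set.InjOn f P := by
    intro p hp q hq hfeq
    obtain ⟨hpp, hpI⟩ := hPmem p hp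
    obtain ⟨hqp, hqI⟩ := hPmem q hq
    exact Nat.dvd_antisymm ((hf p hpI q hqI).mp (le_of_eq hfeq))
      ((hf q hqI p hpI).mp (le_of_eq hfeq.symm))
  set F := P.image f with hF
  have hFcard : F.card = P.card := Finset.card_image_of_injOn hinj
  have hempty : ∅ ∉ F := by
    intro h
    obtain ⟨p, hp, hfp⟩ := Finset.mem_image.mp h
    obtain ⟨hpp, hpI⟩ := hPmem p hp
    have : p ∣ 1 := (hf p hpI 1 h1mem).mp (by rw [hfp]; exact Finset.empty_subset _)
    exact Nat.Prime.one_lt hpp |>.ne' (Nat.dvd_one.mp this)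
  have hcf : ∀ A ∈ F, ∀ S ⊆ F.erase A, S.card ≤ k → ¬ A ⊆ S.sup id := by
    intro A hA S hS hScard hsub
    obtain ⟨p, hp, rfl⟩ := Finset.mem_image.mp hA
    obtain ⟨hpp, hpI⟩ := hPmem p hp
    set Q := P.filter (fun q => f q ∈ S) with hQ
    have hpQ : p ∉ Q := by
      intro h
      exact (Finset.mem_erase.mp (hS (Finset.mem_filter.mp h).2)).1 rfl
    have hQcard : Q.card ≤ k := by
      have himg : Q.image f ⊆ S := by
        intro s hs
        obtain ⟨q, hq, rfl⟩ := Finset.mem_image.mp hs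
        exact (Finset.mem_filter.mp hq).2
      have : Q.card = (Q.image f).card :=
        (Finset.card_image_of_injOn (hinj.mono (fun x hx => (Finset.mem_filter.mp hx).1))).symm
      rw [this]
      exact le_trans (Finset.card_le_card himg) hScard
    set b := ∏ q ∈ Q, q with hb
    have hble : b ≤ n := by
      calc b ≤ y ^ Q.card := by
            apply Finset.prod_le_pow_card
            intro q hq
            have := (Finset.mem_filter.mp ((Finset.mem_filter.mp hq).1)).1
            simp only [Finset.mem_range] at this
            omega
        _ ≤ y ^ k := Nat.pow_le_pow_right hy hQcard
        _ ≤ n := hyk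
    have hb1 : 1 ≤ b :=
      Finset.one_le_prod' (fun q hq =>
        ((hPmem q (Finset.mem_filter.mp hq).1).1).one_lt.le.trans' (by omega))
    have hbI : b ∈ Set.Icc 1 n := Set.mem_Icc.mpr ⟨hb1, hble⟩
    have hSfb : ∀ s ∈ S, s ⊆ f b := by
      intro s hs
      have hsF : s ∈ F := Finset.mem_of_mem_erase (hS hs)
      obtain ⟨q, hq, rfl⟩ := Finset.mem_image.mp hsF
      have hqQ : q ∈ Q := Finset.mem_filter.mpr ⟨hq, hs⟩
      obtain ⟨hqp, hqI⟩ := hPmem q hq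
      exact (hf q hqI b hbI).mpr (Finset.dvd_prod_of_mem _ hqQ)
    have hfpfb : f p ⊆ f b := hsub.trans (Finset.sup_le (fun s hs => hSfb s hs))
    have hpb : p ∣ b := (hf p hpI b hbI).mp hfpfb
    obtain ⟨q, hqQ, hpq⟩ := (Nat.Prime.prime hpp).dvd_finset_prod_iff _ |>.mp hpb
    have : p = q := (Nat.prime_dvd_prime_iff_eq hpp (hPmem q (Finset.mem_filter.mp hqQ).1).1).mp hpq
    exact hpQ (this ▸ hqQ)
  have hmain := bassalygo k F hempty hcf
  have hd : (F.sup id).card ≤ d := by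
    calc (F.sup id).card ≤ Fintype.card (Fin d) := Finset.card_le_univ _
      _ = d := Fintype.card_fin d
  omega

lemma divDim2_spec (n : ℕ) : ∃ f : ℕ → Finset (Fin (divDim2 (Set.Icc 1 n))),
    ∀ a ∈ Set.Icc 1 n, ∀ b ∈ Set.Icc 1 n, (f a ⊆ f b ↔ a ∣ b) := by
  have hne : {d : ℕ | ∃ f : ℕ → Finset (Fin d),
      ∀ a ∈ Set.Icc 1 n, ∀ b ∈ Set.Icc 1 n, (f a ⊆ f b ↔ a ∣ b)}.Nonempty := by
    refine ⟨n+1, fun a => Finset.univ.filter (fun i : Fin (n+1) => (i:ℕ) ∣ a), ?_⟩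
    intro a ha b hb
    obtain ⟨ha1, han⟩ := Set.mem_Icc.mp ha
    constructor
    · intro hsub
      have hmem : (⟨a, by omega⟩ : Fin (n+1)) ∈
          Finset.univ.filter (fun i : Fin (n+1) => (i:ℕ) ∣ a) := by
        simp
      have := hsub hmem
      simpa using this
    · intro hdvd i hi
      simp only [Finset.mem_filter] at hi ⊢
      exact ⟨hi.1, hi.2.trans hdvd⟩
  exact Nat.sInf_mem hne

lemma log_small : ∀ᶠ t : ℝ in Filter.atTop, 1000 * Real.log t ≤ t := by
  filter_upwards [Filter.eventually_ge_atTop (4000000:ℝ)] with t ht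
  have ht0 : (0:ℝ) < t := by linarith
  have h1 : Real.log t = 2 * Real.log (Real.sqrt t) := by
    rw [Real.log_sqrt ht0.le]; ring
  have h2 : Real.log (Real.sqrt t) ≤ Real.sqrt t - 1 :=
    Real.log_le_sub_one_of_pos (Real.sqrt_pos.mpr ht0)
  have hmul : Real.sqrt t * Real.sqrt t = t := Real.mul_self_sqrt ht0.le
  have hnn : (0:ℝ) ≤ Real.sqrt t := Real.sqrt_nonneg t
  have hs : (2000:ℝ) ≤ Real.sqrt t := by nlinarith
  nlinarith

end DivDim2LowerBound

set_option maxHeartbeats 2000000 in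
open DivDim2LowerBound in
/-- Lower bound: `dim₂(D_{[n]}) ≥ (1/16 - ε) (log n)² / (log log n)²` for large `n`. -/
theorem divDim2_Icc_lower_bound :
    ∀ ε : ℝ, 0 < ε → ∃ N : ℕ, ∀ n : ℕ, N ≤ n →
      (1 / 16 - ε) * (Real.log n) ^ 2 / (Real.log (Real.log n)) ^ 2
        ≤ (divDim2 (Set.Icc 1 n) : ℝ) := by
  intro ε hε
  have main : ∀ᶠ n : ℕ in Filter.atTop,
      1 / 16 * (Real.log n) ^ 2 / (Real.log (Real.log n)) ^ 2
        ≤ (divDim2 (Set.Icc 1 n) : ℝ) := by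
    have tL : Filter.Tendsto (fun n : ℕ => Real.log n) Filter.atTop Filter.atTop :=
      Real.tendsto_log_atTop.comp tendsto_natCast_atTop_atTop
    have tl : Filter.Tendsto (fun n : ℕ => Real.log (Real.log n)) Filter.atTop Filter.atTop :=
      Real.tendsto_log_atTop.comp tL
    have hBe : ∀ᶠ n : ℕ in Filter.atTop, 1000 * Real.log (Real.log n) ≤ Real.log n :=
      tL.eventually log_small
    have hCe : ∀ᶠ n : ℕ in Filter.atTop,
        1000 * Real.log (Real.log (Real.log n)) ≤ Real.log (Real.log n) :=
      tl.eventually log_small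
    have hAe : ∀ᶠ n : ℕ in Filter.atTop, (40:ℝ) ≤ Real.log (Real.log n) :=
      tl.eventually_ge_atTop 40
    filter_upwards [hAe, hBe, hCe, Filter.eventually_ge_atTop 2] with n hA hB hC hD
    set L : ℝ := Real.log n with hLdef
    set l : ℝ := Real.log L with hldef
    have hl0 : (0:ℝ) < l := by linarith
    have hL0 : (0:ℝ) < L := by linarith
    have hl1 : (1:ℝ) ≤ l := by linarith
    have hn0 : (0:ℝ) < n := by
      have : (2:ℝ) ≤ (n:ℝ) := by exact_mod_cast hD
      linarith
    have hexpL : Real.exp L = n := Real.exp_log hn0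
    clear_value L
    clear_value l
    set x : ℝ := L^2 * l^3 with hx
    have hx0 : (0:ℝ) < x := by positivity
    have hL2 : (2:ℝ) ≤ L := by linarith
    have hl3 : (1:ℝ) ≤ l^3 := by
      have := pow_le_pow_left₀ (by norm_num : (0:ℝ) ≤ 1) hl1 3
      simpa using this
    have hx2 : (2:ℝ) ≤ x := by nlinarith
    set u : ℕ := ⌊x⌋₊ + 1 with hu
    clear_value x
    have hu1 : 1 ≤ u := by omega
    have hux : x < (u:ℝ) := by
      have := Nat.lt_floor_add_one x
      push_cast [hu]
      push_cast at this
      linarith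
    have hux2 : (u:ℝ) ≤ x + 1 := by
      have := Nat.floor_le hx0.le
      push_cast [hu]
      linarith
    clear_value u
    have hyR1 : 2*x < 2*(u:ℝ) := by linarith
    have hyR2 : 2*(u:ℝ) ≤ 3*x := by linarith
    have hyR0 : (0:ℝ) < 2*(u:ℝ) := by linarith
    set ly : ℝ := Real.log (2*(u:ℝ)) with hly
    have hlogx : Real.log x = 2*l + 3*Real.log l := by
      rw [hx, Real.log_mul (by positivity) (by positivity), Real.log_pow, Real.log_pow,
        ← hldef]
      push_cast
      ring
    have hlogl0 : (0:ℝ) ≤ Real.log l := Real.log_nonneg hl1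
    have hly_lb : 2*l ≤ ly := by
      have h1 : Real.log (2*x) ≤ ly := Real.log_le_log (by positivity) (le_of_lt hyR1)
      have h2 : Real.log (2*x) = Real.log 2 + Real.log x :=
        Real.log_mul (by norm_num) (ne_of_gt hx0)
      have hlog2 : (0:ℝ) < Real.log 2 := Real.log_pos (by norm_num)
      rw [h2, hlogx] at h1
      linarith
    have hly_ub : ly ≤ (21/10)*l := by
      have h1 : ly ≤ Real.log (3*x) := Real.log_le_log hyR0 hyR2
      have h2 : Real.log (3*x) = Real.log 3 + Real.log x :=
        Real.log_mul (by norm_num) (ne_of_gt hx0)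
      have hlog3 : Real.log 3 ≤ 2 := by
        have := Real.log_le_sub_one_of_pos (show (0:ℝ) < 3 by norm_num)
        linarith
      rw [h2, hlogx] at h1
      linarith
    have hly0 : (0:ℝ) < ly := by linarith
    clear_value ly
    set K : ℕ := ⌊L / ly⌋₊ with hK
    have hK1 : (K:ℝ) ≤ L / ly := Nat.floor_le (by positivity)
    have hK2 : (K:ℝ) * ly ≤ L := (le_div_iff₀ hly0).mp hK1
    have hK3 : L < ((K:ℝ)+1) * ly := by
      have h := Nat.lt_floor_add_one (L / ly)
      have h' : L / ly < (K:ℝ) + 1 := by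
        push_cast [hK]
        push_cast at h
        linarith
      calc L = (L / ly) * ly := by field_simp
        _ < ((K:ℝ)+1) * ly := by
            apply mul_lt_mul_of_pos_right h' hly0
    clear_value K
    have hKnn : (0:ℝ) ≤ (K:ℝ) := Nat.cast_nonneg K
    have hlk : 2*(l*(K:ℝ)) ≤ L := by nlinarith
    have hK5 : 5*L ≤ 14*(l*(K:ℝ)) := by
      have h1 : ((K:ℝ)+1) * ly ≤ ((K:ℝ)+1) * ((21/10)*l) :=
        mul_le_mul_of_nonneg_left hly_ub (by linarith)
      nlinarith
    have hK1' : 1 ≤ K := by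
      by_contra hcon
      have hK0 : K = 0 := by omega
      rw [hK0] at hK5
      norm_num at hK5
      linarith
    have hn1 : 1 ≤ n := by omega
    -- y^K ≤ n
    have hyk_nat : (2*u)^K ≤ n := by
      have h1 : (2*(u:ℝ))^K = Real.exp ((K:ℝ) * ly) := by
        rw [hly, Real.exp_nat_mul, Real.exp_log hyR0]
      have h2 : Real.exp ((K:ℝ) * ly) ≤ Real.exp L := Real.exp_le_exp.mpr hK2
      have h3 : ((2*u)^K : ℕ) ≤ (n:ℝ) := by
        push_cast
        calc (2*(u:ℝ))^K = Real.exp ((K:ℝ) * ly) := h1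
          _ ≤ Real.exp L := h2
          _ = n := hexpL
      exact_mod_cast h3
    set m : ℕ := (K+2)^2 with hm
    have hbas_le : bas K ≤ m := bas_le_sq K
    -- Chebyshev numeric inequality
    have hlog2' : (0.6:ℝ) < Real.log 2 := by
      have := Real.log_two_gt_d9
      linarith
    have hm_cast : (m:ℝ) = ((K:ℝ)+2)^2 := by
      push_cast [hm]
      ring
    have hml : ((m:ℝ)+1) * l^2 ≤ L^2 := by
      rw [hm_cast]
      nlinarith [sq_nonneg (L - 2*(l*(K:ℝ))), mul_nonneg hl0.le hKnn]
    have hmain_exp : ((m:ℝ)+1) * ly < (2*(u:ℝ)) * Real.log 2 := by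
      have hm0 : (0:ℝ) ≤ (m:ℝ)+1 := by positivity
      apply lt_of_mul_lt_mul_right _ hl0.le
      have e1 : ((m:ℝ)+1) * ly * l ≤ (21/10) * L^2 := by
        have h1 : ((m:ℝ)+1) * ly ≤ ((m:ℝ)+1) * ((21/10)*l) :=
          mul_le_mul_of_nonneg_left hly_ub hm0
        have h2 : ((m:ℝ)+1) * ly * l ≤ ((m:ℝ)+1) * ((21/10)*l) * l :=
          mul_le_mul_of_nonneg_right h1 hl0.le
        nlinarith
      have hl4 : (2560000:ℝ) ≤ l^4 := by nlinarith
      have e2 : (21/10) * L^2 < (2*(u:ℝ)) * Real.log 2 * l := by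
        have h3 : 2*x * Real.log 2 * l ≤ (2*(u:ℝ)) * Real.log 2 * l := by
          have : (0:ℝ) ≤ Real.log 2 * l := by positivity
          nlinarith
        have h4 : 2*x * Real.log 2 * l = 2 * Real.log 2 * (L^2 * l^4) := by
          rw [hx]; ring
        have h5 : (21/10) * L^2 < 2 * Real.log 2 * (L^2 * l^4) := by
          have hL2pos : (0:ℝ) < L^2 := by positivity
          have hb1 : (0.6:ℝ)*l^4 ≤ Real.log 2*l^4 :=
            mul_le_mul_of_nonneg_right hlog2'.le (by positivity)
          have hb2 : (0.6:ℝ)*2560000 ≤ (0.6:ℝ)*l^4 := by linarith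
          have hb : (21/10:ℝ) < 2*Real.log 2*l^4 := by linarith
          nlinarith [mul_pos (show (0:ℝ) < 2*Real.log 2*l^4 - 21/10 by linarith) hL2pos]
        linarith
      linarith
    have hcheb_real : ((2*u:ℕ):ℝ)^(m+1) < (4:ℝ)^u := by
      have hexp1 : ((2*u:ℕ):ℝ)^(m+1) = Real.exp (((m+1:ℕ):ℝ) * ly) := by
        rw [hly, Real.exp_nat_mul, Real.exp_log hyR0]
        push_cast
        ring
      have hexp2 : (4:ℝ)^u = Real.exp (((2*u:ℕ):ℝ) * Real.log 2) := by
        rw [Real.exp_nat_mul, Real.exp_log (by norm_num : (0:ℝ) < 2)]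
        rw [show (4:ℝ) = 2^2 by norm_num, ← pow_mul]
      rw [hexp1, hexp2]
      apply Real.exp_lt_exp.mpr
      have : ((m+1:ℕ):ℝ) = (m:ℝ)+1 := by push_cast; ring
      rw [this]
      have : ((2*u:ℕ):ℝ) = 2*(u:ℝ) := by push_cast; ring
      rw [this]
      exact hmain_exp
    have hcheb_nat : (2*u)^(m+1) < 4^u := by exact_mod_cast hcheb_real
    have hprimes : m < ((Finset.range (2*u+1)).filter Nat.Prime).card :=
      primes_lower u m hu1 hcheb_nat
    have hPcard : bas K ≤ ((Finset.range (2*u+1)).filter Nat.Prime).card :=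
      le_trans hbas_le (le_of_lt hprimes)
    obtain ⟨f, hf⟩ := divDim2_spec n
    have hred := reduction (y := 2*u) (k := K) hK1' (by omega) hn1 hyk_nat f hf
    have hdd : bas K ≤ divDim2 (Set.Icc 1 n) := by
      rw [min_eq_right hPcard] at hred
      exact hred
    have hdd' : (bas K : ℝ) ≤ (divDim2 (Set.Icc 1 n) : ℝ) := by exact_mod_cast hdd
    have hKsq : (K:ℝ)^2 ≤ 2*(bas K : ℝ) := by exact_mod_cast sq_le_two_mul_bas K
    rw [div_le_iff₀ (by positivity : (0:ℝ) < l^2)]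
    have h25 : (5*L)*(5*L) ≤ (14*(l*(K:ℝ)))*(14*(l*(K:ℝ))) :=
      mul_le_mul hK5 hK5 (by linarith) (by positivity)
    nlinarith
  obtain ⟨N, hN⟩ := Filter.eventually_atTop.mp main
  refine ⟨N, fun n hn => ?_⟩
  have h2 := hN n hn
  have hle : (1/16 - ε) * (Real.log n)^2 / (Real.log (Real.log n))^2
      ≤ 1/16 * (Real.log n)^2 / (Real.log (Real.log n))^2 := by
    rcases eq_or_ne ((Real.log (Real.log n))^2) 0 with h | h
    · rw [h, div_zero, div_zero]
    · have hpos : (0:ℝ) < (Real.log (Real.log n))^2 := lt_of_le_of_ne (sq_nonneg _) (Ne.symm h)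
      apply (div_le_div_iff_of_pos_right hpos).mpr
      exact mul_le_mul_of_nonneg_right (by linarith) (sq_nonneg _)
  linarith
end

section
/- For every ε > 0 there exists N such that for all n ≥ N, the 2-dimension of the divisibility poset on {1,…,n} is at most ((4/3)·e·π² + ε)·(log n)²/(log log n). -/
open Finset

theorem divDim2_le_card_of_subset_iff {α : Type*} [DecidableEq α] {S : Set ℕ}
    (U : Finset α) (f : ℕ → Finset α) (hfU : ∀ a ∈ S, f a ⊆ U)
    (hf : ∀ a ∈ S, ∀ b ∈ S, f a ⊆ f b ↔ a ∣ b) :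
    divDim2 S ≤ #U := by
  refine Nat.sInf_le ⟨fun a => ((f a).subtype (· ∈ U)).map U.equivFin.toEmbedding,
    fun a ha b hb => ?_⟩
  rw [map_subset_map, ← hf a ha b hb]
  refine ⟨fun h x hx => ?_, fun h => subtype_mono h⟩
  simpa using h (mem_subtype.2 hx : (⟨x, hfU a ha hx⟩ : U) ∈ _)

/-- Union bound over the events "no coordinate of `ω` lies in `G i`". -/
theorem exists_fun_forall_exists_apply_mem {C ι : Type*} [Fintype C] [Nonempty C]
    [DecidableEq C] (I : Finset ι) (G : ι → Finset C) (c : ℝ) (m : ℕ)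
    (hG : ∀ i ∈ I, c * Fintype.card C ≤ #(G i)) (hm : #I * (1 - c) ^ m < 1) :
    ∃ ω : Fin m → C, ∀ i ∈ I, ∃ x, ω x ∈ G i := by
  by_contra! h
  have hcover : (univ : Finset (Fin m → C)) ⊆
      I.biUnion fun i => Fintype.piFinset fun _ => (G i)ᶜ := fun ω _ => by
    obtain ⟨i, hi, hω⟩ := h ω
    exact mem_biUnion.2 ⟨i, hi, Fintype.mem_piFinset.2 fun x => mem_compl.2 (hω x)⟩
  have hbad : ∀ i ∈ I, (#(Fintype.piFinset fun _ : Fin m => (G i)ᶜ) : ℝ)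
      ≤ ((1 - c) * Fintype.card C) ^ m := fun i hi => by
    rw [Fintype.card_piFinset_const, Nat.cast_pow, card_compl, Nat.cast_sub (card_le_univ _)]
    exact pow_le_pow_left₀ (sub_nonneg.2 (mod_cast card_le_univ _)) (by linarith [hG i hi]) m
  have hpos : (0 : ℝ) < (Fintype.card C : ℝ) ^ m := by positivity
  have := (Nat.cast_le (α := ℝ)).2 ((card_le_card hcover).trans card_biUnion_le)
  push_cast [card_univ, Fintype.card_fun, Fintype.card_fin] at this
  nlinarith [(sum_le_sum hbad).trans_eq (by rw [sum_const, nsmul_eq_mul, mul_pow, mul_assoc] :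
    ∑ i ∈ I, ((1 - c) * Fintype.card C) ^ m = #I * (1 - c) ^ m * (Fintype.card C : ℝ) ^ m)]

theorem add_one_pow_le_three_mul_pow {k j : ℕ} (hj : j ≤ k) : (k + 1) ^ j ≤ 3 * k ^ j := by
  rcases Nat.eq_zero_or_pos k with rfl | hk
  · simp [Nat.le_zero.1 hj]
  have hk' : (0 : ℝ) < k := by exact_mod_cast hk
  have key : ((k : ℝ) + 1) ^ j ≤ 3 * (k : ℝ) ^ j := calc
    ((k : ℝ) + 1) ^ j = (1 + (k : ℝ)⁻¹) ^ j * (k : ℝ) ^ j := by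
      rw [← mul_pow, add_mul, one_mul, inv_mul_cancel₀ hk'.ne', add_comm]
    _ ≤ (1 + (k : ℝ)⁻¹) ^ k * (k : ℝ) ^ j := by
      gcongr
      · exact le_add_of_nonneg_right (by positivity)
    _ ≤ Real.exp 1 * (k : ℝ) ^ j := by gcongr; exact Real.one_add_inv_pow_le_exp
    _ ≤ 3 * (k : ℝ) ^ j := by gcongr; exact Real.exp_one_lt_three.le
  exact_mod_cast key

/-- A colouring with `k + 1` colours gives `v` colour `0` and avoids `0` on `B` with probability
`(k / (k + 1)) ^ #B / (k + 1) ≥ 1 / (3 (k + 1))`. -/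
theorem pow_card_le_three_mul_card_piFinset {V : Type*} [Fintype V] [DecidableEq V] {k : ℕ}
    (v : V) (B : Finset V) (hv : v ∉ B) (hB : #B ≤ k) :
    (k + 1) ^ Fintype.card V ≤ 3 * (k + 1) * #(Fintype.piFinset fun q =>
      if q = v then {0} else if q ∈ B then {0}ᶜ else (univ : Finset (Fin (k + 1)))) := by
  set S : V → Finset (Fin (k + 1)) :=
    fun q => if q = v then {0} else if q ∈ B then {0}ᶜ else univ
  have hvc : v ∈ Bᶜ := mem_compl.2 hv
  have hSB : ∀ q ∈ B, #(S q) = k := fun q hq => by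
    simp [S, ne_of_mem_of_not_mem hq hv, hq, card_compl]
  have hSrest : ∀ q ∈ Bᶜ.erase v, #(S q) = k + 1 := fun q hq => by
    simp [S, ne_of_mem_erase hq, mem_compl.1 (mem_of_mem_erase hq)]
  have hcard : Fintype.card V = #B + (#(Bᶜ.erase v) + 1) := by
    rw [card_erase_add_one hvc, card_add_card_compl]
  rw [Fintype.card_piFinset, ← prod_mul_prod_compl B, ← mul_prod_erase Bᶜ _ hvc,
    prod_congr rfl hSB, prod_congr rfl hSrest, prod_const, prod_const, hcard, pow_add, pow_succ]
  simp only [S, ite_true, card_singleton, one_mul]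
  calc (k + 1) ^ #B * ((k + 1) ^ #(Bᶜ.erase v) * (k + 1))
      ≤ 3 * k ^ #B * ((k + 1) ^ #(Bᶜ.erase v) * (k + 1)) := by
        gcongr; exact add_one_pow_le_three_mul_pow hB
    _ = 3 * (k + 1) * (k ^ #B * (k + 1) ^ #(Bᶜ.erase v)) := by ring

/-- A `k`-cover-free code of `U` of length `m`, read on subsets: `Φ A` is the set of rounds in
which some element of `A` gets colour `0`. -/
theorem exists_map_subset_iff_of_card_le {α ι : Type*} [DecidableEq α] (U : Finset α)
    (I : Finset ι) (B : ι → Finset α) (k m : ℕ) (hBk : ∀ i ∈ I, #(B i) ≤ k)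
    (hm : (#I * #U : ℝ) < Real.exp (m / (3 * (k + 1)))) :
    ∃ Φ : Finset α → Finset (Fin m), ∀ A ⊆ U, ∀ i ∈ I, Φ A ⊆ Φ (B i) ↔ A ⊆ B i := by
  classical
  set P : Finset (ι × α) := (I ×ˢ U).filter fun p => p.2 ∉ B p.1
  set G : ι × α → Finset (U → Fin (k + 1)) := fun p => Fintype.piFinset fun q =>
    if (q : α) = p.2 then {0} else if q ∈ (B p.1).subtype (· ∈ U) then {0}ᶜ else univ
  have hG : ∀ p ∈ P, 1 / (3 * (k + 1)) * (Fintype.card (U → Fin (k + 1)) : ℝ) ≤ #(G p) := by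
    rintro ⟨i, v⟩ hp
    obtain ⟨hiv, hvB⟩ := mem_filter.1 hp
    have := pow_card_le_three_mul_card_piFinset (⟨v, (mem_product.1 hiv).2⟩ : U)
      ((B i).subtype (· ∈ U)) (by simpa using hvB)
      ((card_subtype _ _).trans_le ((card_filter_le _ _).trans (hBk i (mem_product.1 hiv).1)))
    rw [Fintype.card_fun, Fintype.card_fin, one_div_mul_eq_div, div_le_iff₀ (by positivity)]
    simp only [Subtype.ext_iff] at this
    exact_mod_cast this.trans_eq (mul_comm _ _)
  have hP : #P * (1 - 1 / (3 * (k + 1) : ℝ)) ^ m < 1 := by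
    have hPc : (#P : ℝ) ≤ #I * #U := by
      exact_mod_cast (card_filter_le _ _).trans (card_product I U).le
    have hc : 0 ≤ 1 - 1 / (3 * (k + 1) : ℝ) := by
      rw [sub_nonneg, div_le_one (by positivity)]; linarith [(k.cast_nonneg : (0 : ℝ) ≤ k)]
    calc #P * (1 - 1 / (3 * (k + 1) : ℝ)) ^ m
        ≤ #I * #U * Real.exp (-(1 / (3 * (k + 1)))) ^ m :=
          mul_le_mul hPc (pow_le_pow_left₀ hc (Real.one_sub_le_exp_neg _) m) (by positivity)
            (by positivity)
      _ = #I * #U / Real.exp (m / (3 * (k + 1))) := by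
          rw [← Real.exp_nat_mul, mul_neg, Real.exp_neg, ← div_eq_mul_inv, mul_one_div]
      _ < 1 := by rwa [div_lt_one (Real.exp_pos _)]
  obtain ⟨ω, hω⟩ := exists_fun_forall_exists_apply_mem P G _ m hG hP
  refine ⟨fun A => univ.filter fun x => ∃ q : U, (q : α) ∈ A ∧ ω x q = 0, fun A hA i hi => ?_⟩
  refine ⟨fun hΦ v hvA => ?_, fun hAB x hx => ?_⟩
  · by_contra hvB
    obtain ⟨x, hx⟩ := hω (i, v) (mem_filter.2 ⟨mem_product.2 ⟨hi, hA hvA⟩, hvB⟩)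
    rw [Fintype.mem_piFinset] at hx
    have hxv : ω x ⟨v, hA hvA⟩ = 0 := by simpa using hx ⟨v, hA hvA⟩
    obtain ⟨q, hqB, hq0⟩ := (mem_filter.1 (hΦ (mem_filter.2 ⟨mem_univ x, _, hvA, hxv⟩))).2
    have hqv : (q : α) ≠ v := ne_of_mem_of_not_mem hqB hvB
    simpa [hqv, hqB, hq0] using hx q
  · obtain ⟨-, q, hqA, hq0⟩ := mem_filter.1 hx
    exact mem_filter.2 ⟨mem_univ x, q, hAB hqA, hq0⟩

def smallPrimePowDivisors (T a : ℕ) : Finset ℕ :=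
  a.divisors.filter fun q => IsPrimePow q ∧ q.minFac < T

def largePrimePowDivisors (T a : ℕ) : Finset ℕ :=
  a.divisors.filter fun q => IsPrimePow q ∧ T ≤ q.minFac

theorem dvd_iff_primePowDivisors_subset (T : ℕ) {a b : ℕ} (ha : a ≠ 0) (hb : b ≠ 0) :
    a ∣ b ↔ smallPrimePowDivisors T a ⊆ smallPrimePowDivisors T b ∧
      largePrimePowDivisors T a ⊆ largePrimePowDivisors T b := by
  refine ⟨fun h => ⟨filter_subset_filter _ (Nat.divisors_subset_of_dvd hb h),
    filter_subset_filter _ (Nat.divisors_subset_of_dvd hb h)⟩, fun ⟨hs, hl⟩ => ?_⟩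
  refine (Nat.dvd_iff_prime_pow_dvd_dvd b a).2 fun p i hp hpi => ?_
  rcases Nat.eq_zero_or_pos i with rfl | hi
  · simp
  have hpp : IsPrimePow (p ^ i) := hp.isPrimePow.pow hi.ne'
  have hmem : p ^ i ∈ a.divisors := Nat.mem_divisors.2 ⟨hpi, ha⟩
  have hmin : (p ^ i).minFac = p := hp.pow_minFac hi.ne'
  rcases lt_or_ge p T with hpT | hpT
  · exact Nat.dvd_of_mem_divisors
      (mem_filter.1 (hs (mem_filter.2 ⟨hmem, hpp, by rwa [hmin]⟩))).1
  · exact Nat.dvd_of_mem_divisors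
      (mem_filter.1 (hl (mem_filter.2 ⟨hmem, hpp, by rwa [hmin]⟩))).1

open ArithmeticFunction in
theorem card_largePrimePowDivisors_mul_log_le (T a : ℕ) :
    #(largePrimePowDivisors T a) * Real.log T ≤ Real.log a :=
  calc #(largePrimePowDivisors T a) * Real.log T
      = ∑ _q ∈ largePrimePowDivisors T a, Real.log T := by rw [sum_const, nsmul_eq_mul]
    _ ≤ ∑ q ∈ largePrimePowDivisors T a, Λ q := sum_le_sum fun q hq => by
        obtain ⟨-, hq, hT⟩ := mem_filter.1 hq
        rw [vonMangoldt_apply, if_pos hq]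
        rcases Nat.eq_zero_or_pos T with rfl | hT0
        · simpa using Real.log_natCast_nonneg _
        · exact Real.log_le_log (by positivity) (by exact_mod_cast hT)
    _ ≤ ∑ q ∈ a.divisors, Λ q :=
        sum_le_sum_of_subset_of_nonneg (filter_subset _ _) fun _ _ _ => vonMangoldt_nonneg
    _ = Real.log a := vonMangoldt_sum

theorem smallPrimePowDivisors_subset_image (T : ℕ) {a n : ℕ} (ha : a ≠ 0) (han : a ≤ n) :
    smallPrimePowDivisors T a ⊆
      (range T ×ˢ Icc 1 (Nat.log 2 n)).image fun x => x.1 ^ x.2 := by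
  intro q hq
  obtain ⟨hqa, hpp, hqT⟩ := mem_filter.1 hq
  obtain ⟨p, e, hp, he, rfl⟩ := isPrimePow_nat_iff _ |>.1 hpp
  rw [hp.pow_minFac he.ne'] at hqT
  have h2e : 2 ^ e ≤ n := (Nat.pow_le_pow_left hp.two_le e).trans
    ((Nat.le_of_dvd (Nat.pos_of_ne_zero ha) (Nat.dvd_of_mem_divisors hqa)).trans han)
  exact mem_image.2 ⟨(p, e), mem_product.2 ⟨mem_range.2 hqT,
    mem_Icc.2 ⟨he, Nat.le_log_of_pow_le one_lt_two h2e⟩⟩, rfl⟩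

theorem divDim2_Icc_le (n T k M : ℕ) (hk : Real.log n < (k + 1) * Real.log T)
    (hM : 2 * Real.log n < M) :
    divDim2 (Set.Icc 1 n) ≤ T * Nat.log 2 n + 3 * (k + 1) * M := by
  have hlarge : ∀ a ∈ Icc 1 n, #(largePrimePowDivisors T a) ≤ k := fun a ha => by
    obtain ⟨ha1, han⟩ := mem_Icc.1 ha
    have : (#(largePrimePowDivisors T a) : ℝ) * Real.log T < (k + 1) * Real.log T :=
      (card_largePrimePowDivisors_mul_log_le T a).trans_lt
        ((Real.log_le_log (by exact_mod_cast ha1) (by exact_mod_cast han)).trans_lt hk)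
    have := lt_of_mul_lt_mul_right this (Real.log_natCast_nonneg T)
    exact Nat.lt_succ_iff.1 (by exact_mod_cast this)
  have hnn : (#(Icc 1 n) * #(Icc 1 n) : ℝ)
      < Real.exp ((3 * (k + 1) * M : ℕ) / (3 * (k + 1))) := by
    rw [Nat.card_Icc, add_tsub_cancel_right, Nat.cast_mul, Nat.cast_mul, Nat.cast_add,
      Nat.cast_one, Nat.cast_ofNat, mul_div_cancel_left₀ _ (by positivity)]
    rcases Nat.eq_zero_or_pos n with rfl | hn
    · simp [Real.exp_pos]
    · rw [← Real.exp_log (by positivity : (0 : ℝ) < n * n),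
        Real.log_mul (by positivity) (by positivity)]
      exact Real.exp_lt_exp.2 (by linarith)
  obtain ⟨Φ, hΦ⟩ := exists_map_subset_iff_of_card_le (Icc 1 n) (Icc 1 n)
    (largePrimePowDivisors T) k _ hlarge hnn
  have hcard := card_disjSum ((range T ×ˢ Icc 1 (Nat.log 2 n)).image fun x => x.1 ^ x.2)
    (univ : Finset (Fin (3 * (k + 1) * M)))
  refine (divDim2_le_card_of_subset_iff _
    (fun a => (smallPrimePowDivisors T a).disjSum (Φ (largePrimePowDivisors T a))) ?_ ?_).trans
    (hcard.trans_le ?_)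
  · rintro a ⟨ha1, han⟩
    exact disjSum_mono (smallPrimePowDivisors_subset_image T (by lia) han) (subset_univ _)
  · rintro a ⟨ha1, han⟩ b ⟨hb1, hbn⟩
    have hlarge_sub : largePrimePowDivisors T a ⊆ Icc 1 n := fun q hq =>
      have hqa := (mem_filter.1 hq).1
      mem_Icc.2 ⟨Nat.pos_of_mem_divisors hqa, (Nat.divisor_le hqa).trans han⟩
    simp only [disjSum_subset, toLeft_disjSum, toRight_disjSum]
    rw [hΦ _ hlarge_sub b (mem_Icc.2 ⟨hb1, hbn⟩),
      dvd_iff_primePowDivisors_subset T (by lia) (by lia)]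
  · gcongr
    · exact card_image_le.trans (by simp)
    · simp

theorem natLog_two_le_two_mul_log (n : ℕ) : (Nat.log 2 n : ℝ) ≤ 2 * Real.log n := by
  have hlog2 : (1 / 2 : ℝ) < Real.log 2 := by linarith [Real.log_two_gt_d9]
  have := Real.natLog_le_logb n 2
  rw [Real.logb, Nat.cast_ofNat, le_div_iff₀ (by linarith)] at this
  nlinarith [Real.log_natCast_nonneg n, Nat.cast_nonneg (α := ℝ) (Nat.log 2 n)]

theorem log_le_two_mul_sqrt {x : ℝ} (hx : 0 ≤ x) : Real.log x ≤ 2 * √x := by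
  rcases hx.eq_or_lt with rfl | hx
  · simp
  have := Real.log_le_sub_one_of_pos (Real.sqrt_pos.2 hx)
  rw [Real.log_sqrt hx.le] at this
  linarith

/-- The parameters of `divDim2_Icc_le`: `T = ⌈√L⌉`, `k = ⌊L / log T⌋`, `M = ⌊2L⌋ + 1`
for `L = log n`. -/
theorem divDim2_Icc_mul_log_log_le (n : ℕ) (hn : 9 ≤ Real.log n) :
    (divDim2 (Set.Icc 1 n) : ℝ) * Real.log (Real.log n) ≤ 24 * Real.log n ^ 2 := by
  set L := Real.log n
  set s := √L
  have hs : 3 ≤ s := Real.le_sqrt_of_sq_le (by linarith)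
  have hLs : L = s ^ 2 := (Real.sq_sqrt (by linarith)).symm
  have hlogs : 0 < Real.log s := Real.log_pos (by linarith)
  have hlogLs : Real.log L = 2 * Real.log s := by rw [Real.log_sqrt (by linarith)]; ring
  set T := ⌈s⌉₊
  have hT : (T : ℝ) ≤ s + 1 := (Nat.ceil_lt_add_one (by linarith)).le
  have hlogT : Real.log s ≤ Real.log T := Real.log_le_log (by linarith) (Nat.le_ceil s)
  set k := ⌊L / Real.log T⌋₊
  have hk : L < (k + 1) * Real.log T := by
    rw [← div_lt_iff₀ (by linarith)]; exact Nat.lt_floor_add_one _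
  have hkL : k * Real.log L ≤ 2 * L := by
    have := Nat.floor_le (div_nonneg (by linarith) (by linarith) : 0 ≤ L / Real.log T)
    rw [le_div_iff₀ (by linarith)] at this
    nlinarith [Nat.cast_nonneg (α := ℝ) k]
  set M := ⌊2 * L⌋₊ + 1
  have hM : 2 * L < M := by push_cast [M]; exact Nat.lt_floor_add_one _
  have hM' : (M : ℝ) ≤ 2 * L + 1 := by
    push_cast [M]; linarith [Nat.floor_le (by linarith : 0 ≤ 2 * L)]
  have hdim : (divDim2 (Set.Icc 1 n) : ℝ) ≤ T * Nat.log 2 n + 3 * (k + 1) * M := by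
    exact_mod_cast divDim2_Icc_le n T k M hk hM
  have hlogL : Real.log L ≤ 2 * s := log_le_two_mul_sqrt (by linarith)
  have hL2 := natLog_two_le_two_mul_log n
  calc (divDim2 (Set.Icc 1 n) : ℝ) * Real.log L
      ≤ (T * Nat.log 2 n + 3 * (k + 1) * M) * Real.log L := by gcongr; linarith
    _ = T * Nat.log 2 n * Real.log L + 3 * (k * Real.log L + Real.log L) * M := by ring
    _ ≤ (s + 1) * (2 * L) * (2 * s) + 3 * (2 * L + 2 * s) * (2 * L + 1) := by
        gcongr
        · linarith
    _ ≤ 24 * L ^ 2 := by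
        rw [hLs]
        nlinarith [pow_le_pow_left₀ (by norm_num) hs 3,
          mul_le_mul_of_nonneg_right hs (by positivity : (0 : ℝ) ≤ s ^ 3)]

/-- Upper bound: `dim₂(D_{[n]}) ≤ ((4/3) e π² + ε) (log n)² / log log n` for large `n`. -/
theorem divDim2_Icc_upper_bound :
    ∀ ε : ℝ, 0 < ε → ∃ N : ℕ, ∀ n : ℕ, N ≤ n →
      (divDim2 (Set.Icc 1 n) : ℝ)
        ≤ ((4 / 3) * Real.exp 1 * Real.pi ^ 2 + ε) * (Real.log n) ^ 2
            / Real.log (Real.log n) := by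
  intro ε hε
  refine ⟨⌈Real.exp 9⌉₊, fun n hn => ?_⟩
  have hL : 9 ≤ Real.log n :=
    (Real.le_log_iff_exp_le (by linarith [Real.exp_pos 9, Nat.ceil_le.1 hn])).2 (Nat.ceil_le.1 hn)
  have hC : (24 : ℝ) ≤ 4 / 3 * Real.exp 1 * Real.pi ^ 2 + ε := by
    nlinarith [Real.pi_gt_three, Real.add_one_le_exp 1]
  rw [le_div_iff₀ (Real.log_pos (by linarith))]
  exact (divDim2_Icc_mul_log_log_le n hL).trans (by gcongr)
end

section
/- For all integers n ≥ 1 and 1 ≤ k ≤ n−1, the 2-dimension of the poset Q^n_{1,k} of subsets of {1,…,n} of cardinality 1 or k (ordered by inclusion) and the 2-dimension of the poset Q^n_{[0,k]} of subsets of {1,…,n} of cardinality at most k (ordered by inclusion) are both equal to N₂(n, k+1), the minimum cardinality of a (k+1)-suitable family of subsets of {1,…,n}. -/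
/-- The 2-dimension of a poset `P`: the least `d` such that there is an order
embedding of `P` into the powerset of `{1,…,d}` ordered by inclusion. -/
noncomputable def dim2 (P : Type*) [PartialOrder P] : ℕ :=
  sInf {d : ℕ | ∃ f : P → Finset (Fin d), ∀ a b : P, (f a ⊆ f b ↔ a ≤ b)}

/-- A family `S` of subsets of `{1,…,n}` (modelled as `Fin n`) is a `k`-suitable family
if for every pointed `k`-subset `(A, a)` there is `B ∈ S` with `A ∩ B = {a}`. -/
def IsSuitableFamily (n k : ℕ) (S : Finset (Finset (Fin n))) : Prop :=
  ∀ A : Finset (Fin n), A.card = k → ∀ a ∈ A, ∃ B ∈ S, A ∩ B = {a}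

/-- `N₂(n, k)`: the minimum cardinality of a `k`-suitable family of subsets of `{1,…,n}`. -/
noncomputable def suitableNumber2 (n k : ℕ) : ℕ :=
  sInf {m : ℕ | ∃ S : Finset (Finset (Fin n)), IsSuitableFamily n k S ∧ S.card = m}

/-!
A `(k+1)`-suitable family `S` gives the embedding `A ↦ {B ∈ S | A ∩ B ≠ ∅}` of `Q^n_{[0,k]}`:
if `a ∈ A \ B`, extend `B ∪ {a}` to a `(k+1)`-set `C`; the member of `S` meeting `C` exactly
in `a` meets `A` but not `B`. Conversely, an embedding `f` of `Q^n_{1,k}` into the subsets of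
`[d]` gives the `(k+1)`-suitable family `{{x | i ∈ f {x}} | i ∈ [d]}`: for a pointed
`(k+1)`-set `(A, a)`, a coordinate `i ∈ f {a} \ f (A \ {a})` works. Since
`Q^n_{1,k} ⊆ Q^n_{[0,k]}`, this closes the cycle
`N₂(n,k+1) ≤ dim₂(Q^n_{1,k}) ≤ dim₂(Q^n_{[0,k]}) ≤ N₂(n,k+1)`.
-/

open Finset

section Dim2

variable {P : Type*} [PartialOrder P]

theorem exists_embedding_fin_card {ι : Type*} [Fintype ι] (f : P → Finset ι)
    (hf : ∀ a b, f a ⊆ f b ↔ a ≤ b) :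
    ∃ g : P → Finset (Fin (Fintype.card ι)), ∀ a b, g a ⊆ g b ↔ a ≤ b :=
  ⟨fun a => (f a).map (Fintype.equivFin ι).toEmbedding, fun a b => by
    rw [Finset.map_subset_map, hf]⟩

theorem dim2_le_card {ι : Type*} [Fintype ι] (f : P → Finset ι)
    (hf : ∀ a b, f a ⊆ f b ↔ a ≤ b) : dim2 P ≤ Fintype.card ι :=
  Nat.sInf_le (exists_embedding_fin_card f hf)

theorem exists_embedding_fin_dim2 [Finite P] :
    ∃ f : P → Finset (Fin (dim2 P)), ∀ a b, f a ⊆ f b ↔ a ≤ b := by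
  classical
  have := Fintype.ofFinite P
  exact Nat.sInf_mem (s := {d | ∃ f : P → Finset (Fin d), ∀ a b, f a ⊆ f b ↔ a ≤ b})
    ⟨_, exists_embedding_fin_card (fun a : P => univ.filter (· ≤ a)) fun a b =>
      ⟨fun h => by simpa using h (mem_filter.2 ⟨mem_univ a, le_rfl⟩),
        fun h x hx => by simpa using (mem_filter.1 hx).2.trans h⟩⟩

theorem dim2_mono {Q : Type*} [PartialOrder Q] [Finite Q] (e : P ↪o Q) :
    dim2 P ≤ dim2 Q := by
  obtain ⟨f, hf⟩ := exists_embedding_fin_dim2 (P := Q)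
  simpa using dim2_le_card (f ∘ e) fun a b => (hf _ _).trans e.le_iff_le

end Dim2

section Suitable

variable {n k : ℕ}

theorem isSuitableFamily_univ (n k : ℕ) : IsSuitableFamily n k univ := fun _ _ a ha =>
  ⟨{a}, mem_univ _, inter_eq_right.2 (singleton_subset_iff.2 ha)⟩

theorem suitableNumber2_le_card {S : Finset (Finset (Fin n))} (hS : IsSuitableFamily n k S) :
    suitableNumber2 n k ≤ S.card :=
  Nat.sInf_le ⟨S, hS, rfl⟩

theorem exists_isSuitableFamily_card_eq (n k : ℕ) :
    ∃ S, IsSuitableFamily n k S ∧ S.card = suitableNumber2 n k :=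
  Nat.sInf_mem (s := {m | ∃ S, IsSuitableFamily n k S ∧ S.card = m})
    ⟨_, univ, isSuitableFamily_univ n k, rfl⟩

theorem IsSuitableFamily.exists_mem_disjoint {S : Finset (Finset (Fin n))}
    (hS : IsSuitableFamily n (k + 1) S) (hk : k + 1 ≤ n) {B : Finset (Fin n)} (hB : B.card ≤ k)
    {a : Fin n} (ha : a ∉ B) : ∃ T ∈ S, a ∈ T ∧ Disjoint B T := by
  obtain ⟨C, hBC, -, hC⟩ := exists_subsuperset_card_eq (subset_univ (insert a B))
    ((card_insert_le a B).trans (Nat.succ_le_succ hB)) (by simpa using hk)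
  obtain ⟨T, hTS, hCT⟩ := hS C hC a (hBC (mem_insert_self a B))
  have hTa : ∀ x ∈ C, x ∈ T → x = a := fun x hxC hxT =>
    mem_singleton.1 (hCT ▸ mem_inter.2 ⟨hxC, hxT⟩)
  refine ⟨T, hTS, (mem_inter.1 (hCT ▸ mem_singleton_self a)).2, disjoint_left.2 ?_⟩
  intro x hxB hxT
  exact ha (hTa x (hBC (mem_insert_of_mem hxB)) hxT ▸ hxB)

theorem dim2_le_card_of_isSuitableFamily {S : Finset (Finset (Fin n))}
    (hS : IsSuitableFamily n (k + 1) S) (hk : k + 1 ≤ n) :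
    dim2 {A : Finset (Fin n) // A.card ≤ k} ≤ S.card := by
  classical
  simpa using dim2_le_card (ι := S) (fun A => univ.filter fun T : S => ¬Disjoint A.1 T.1)
    fun A B => by
      refine ⟨fun h => ?_, fun h T hT => ?_⟩
      · show A.1 ⊆ B.1
        intro a haA
        by_contra haB
        obtain ⟨T, hTS, haT, hBT⟩ := hS.exists_mem_disjoint hk B.2 haB
        have hT :=
          h (mem_filter.2 ⟨mem_univ ⟨T, hTS⟩, not_disjoint_iff.2 ⟨a, haA, haT⟩⟩)
        exact (mem_filter.1 hT).2 hBT
      · simp only [mem_filter, mem_univ, true_and] at hT ⊢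
        exact fun hB => hT (hB.mono_left h)

theorem suitableNumber2_le_card_of_embedding {ι : Type*} [Fintype ι]
    (f : {A : Finset (Fin n) // A.card = 1 ∨ A.card = k} → Finset ι)
    (hf : ∀ a b, f a ⊆ f b ↔ a ≤ b) : suitableNumber2 n (k + 1) ≤ Fintype.card ι := by
  classical
  let pt : Fin n → {A : Finset (Fin n) // A.card = 1 ∨ A.card = k} :=
    fun x => ⟨{x}, Or.inl (card_singleton x)⟩
  let fiber : ι → Finset (Fin n) := fun i => univ.filter fun x => i ∈ f (pt x)
  refine (suitableNumber2_le_card (S := univ.image fiber) ?_).trans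
    (card_image_le.trans_eq card_univ)
  intro A hA a ha
  let A' : {A : Finset (Fin n) // A.card = 1 ∨ A.card = k} :=
    ⟨A.erase a, Or.inr (by rw [card_erase_of_mem ha, hA]; rfl)⟩
  have hpt : ∀ x, pt x ≤ A' ↔ x ∈ A.erase a := fun x => singleton_subset_iff
  obtain ⟨i, hia, hiA'⟩ := not_subset.1 (mt (hf (pt a) A').1 (by simp [hpt]))
  refine ⟨fiber i, mem_image_of_mem _ (mem_univ i), ?_⟩
  ext x
  simp only [mem_inter, mem_singleton, fiber, mem_filter, mem_univ, true_and]
  refine ⟨fun ⟨hxA, hxi⟩ => ?_, ?_⟩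
  · by_contra hxa
    exact hiA' ((hf (pt x) A').2 ((hpt x).2 (mem_erase.2 ⟨hxa, hxA⟩)) hxi)
  · rintro rfl
    exact ⟨ha, hia⟩

end Suitable

theorem dim2_eq_suitableNumber2_general (n k : ℕ) (hk1 : 1 ≤ k) (hk2 : k ≤ n - 1) :
    dim2 {A : Finset (Fin n) // A.card = 1 ∨ A.card = k} = suitableNumber2 n (k + 1) ∧
      dim2 {A : Finset (Fin n) // A.card ≤ k} = suitableNumber2 n (k + 1) := by
  have hk : k + 1 ≤ n := by omega
  have h₁₂ : dim2 {A : Finset (Fin n) // A.card = 1 ∨ A.card = k} ≤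
      dim2 {A : Finset (Fin n) // A.card ≤ k} :=
    dim2_mono <| OrderEmbedding.ofMapLEIff
      (fun A => ⟨A.1, A.2.elim (fun h => h.trans_le hk1) le_of_eq⟩) fun _ _ => Iff.rfl
  have h₂ : dim2 {A : Finset (Fin n) // A.card ≤ k} ≤ suitableNumber2 n (k + 1) := by
    obtain ⟨S, hS, hcard⟩ := exists_isSuitableFamily_card_eq n (k + 1)
    exact hcard ▸ dim2_le_card_of_isSuitableFamily hS hk
  have h₁ : suitableNumber2 n (k + 1) ≤
      dim2 {A : Finset (Fin n) // A.card = 1 ∨ A.card = k} := by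
    obtain ⟨f, hf⟩ :=
      exists_embedding_fin_dim2 (P := {A : Finset (Fin n) // A.card = 1 ∨ A.card = k})
    simpa using suitableNumber2_le_card_of_embedding f hf
  omega

/-- `dim₂(Q^n_{1,k}) = dim₂(Q^n_{[0,k]}) = N₂(n, k+1)` for `1 ≤ k ≤ n - 1`. -/
theorem dim2_eq_suitableNumber2 (n k : ℕ) (hn : 1 ≤ n) (hk1 : 1 ≤ k) (hk2 : k ≤ n - 1) :
    dim2 {A : Finset (Fin n) // A.card = 1 ∨ A.card = k} = suitableNumber2 n (k + 1) ∧
      dim2 {A : Finset (Fin n) // A.card ≤ k} = suitableNumber2 n (k + 1) :=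
  dim2_eq_suitableNumber2_general n k hk1 hk2
end

section
/- Let P be a finite poset of cardinality n ≥ 2 in which every element x satisfies |{y ∈ P : y > x}| ≤ υ (maximum outdegree at most υ). Then the 2-dimension of P is at most ⌈2e·(υ + 2)·log n⌉. -/
open Finset


lemma aux_exp (k : ℕ) (hk : 1 ≤ k) : (1 + 1/(k:ℝ))^k ≤ Real.exp 1 := by
  have hk0 : (0:ℝ) < k := by exact_mod_cast Nat.lt_of_lt_of_le Nat.zero_lt_one hk
  have h1 : (1 : ℝ) + 1/k ≤ Real.exp (1/k) := by
    have := Real.add_one_le_exp (1/(k:ℝ)); linarith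
  calc (1 + 1/(k:ℝ))^k ≤ (Real.exp (1/k))^k := by
        apply pow_le_pow_left₀ (by positivity) h1
  _ = Real.exp 1 := by
        rw [← Real.exp_nat_mul]
        congr 1
        field_simp

lemma ratio_ge (k : ℕ) (hk : 1 ≤ k) :
    1 / (Real.exp 1 * ((k:ℝ)+1)) ≤ (k:ℝ)^k / ((k:ℝ)+1)^(k+1) := by
  have hk0 : (0:ℝ) < k := by exact_mod_cast Nat.lt_of_lt_of_le Nat.zero_lt_one hk
  have h1 : ((k:ℝ)+1)^k ≤ Real.exp 1 * (k:ℝ)^k := by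
    have := aux_exp k hk
    have h2 : ((1 : ℝ) + 1/k)^k * (k:ℝ)^k = ((k:ℝ)+1)^k := by
      rw [← mul_pow]; congr 1; field_simp
    have h3 : ((1 : ℝ) + 1/k)^k * (k:ℝ)^k ≤ Real.exp 1 * (k:ℝ)^k := by
      apply mul_le_mul_of_nonneg_right this (by positivity)
    linarith
  rw [div_le_div_iff₀ (by positivity) (by positivity)]
  have : ((k:ℝ)+1)^(k+1) = ((k:ℝ)+1)^k * ((k:ℝ)+1) := by ring
  rw [this]
  calc 1 * (((k:ℝ)+1)^k * ((k:ℝ)+1)) ≤ (Real.exp 1 * (k:ℝ)^k) * ((k:ℝ)+1) := by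
        rw [one_mul]; apply mul_le_mul_of_nonneg_right h1 (by positivity)
  _ = (k:ℝ)^k * (Real.exp 1 * ((k:ℝ)+1)) := by ring

lemma perpair (n m d G : ℕ) (hn : 2 ≤ n) (hm : 2 ≤ m)
    (hG1 : (m-1)^(m-1) * m^n ≤ G * m^m) (hG2 : G ≤ m^n)
    (hd : 2 * Real.exp 1 * m * Real.log n ≤ d) :
    ((m^n - G : ℕ) : ℝ)^d * (n:ℝ)^2 ≤ ((m:ℝ)^n)^d := by
  set k : ℕ := m - 1 with hk
  have hk1 : 1 ≤ k := by omega
  have hmk : m = k + 1 := by omega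
  have hkR : ((k:ℝ)) = (m:ℝ) - 1 := by
    have : (m:ℝ) = (k:ℝ) + 1 := by exact_mod_cast congrArg (Nat.cast : ℕ → ℝ) hmk
    linarith
  have hn0 : (0:ℝ) < n := by positivity
  have hm0 : (0:ℝ) < m := by positivity
  have hM : (0:ℝ) < (m:ℝ)^n := by positivity
  -- cast hG1
  have hG1R : ((m:ℝ)-1)^k * (m:ℝ)^n ≤ (G:ℝ) * (m:ℝ)^m := by
    have := hG1
    have hcast : (((m-1)^(m-1) * m^n : ℕ) : ℝ) ≤ ((G * m^m : ℕ) : ℝ) := by exact_mod_cast this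
    push_cast [Nat.cast_sub (by omega : 1 ≤ m)] at hcast
    convert hcast using 3
  -- q0 ≤ G / M
  have hq0 : 1 / (Real.exp 1 * m) ≤ (G:ℝ) / (m:ℝ)^n := by
    have hr := ratio_ge k hk1
    have hMm : ((m:ℝ)-1)^k / (m:ℝ)^m ≤ (G:ℝ) / (m:ℝ)^n := by
      rw [div_le_div_iff₀ (by positivity) hM]
      calc ((m:ℝ)-1)^k * (m:ℝ)^n ≤ (G:ℝ) * (m:ℝ)^m := hG1R
      _ = (G:ℝ) * (m:ℝ)^m := rfl
    have heq : ((m:ℝ)-1)^k / (m:ℝ)^m = (k:ℝ)^k / ((k:ℝ)+1)^(k+1) := by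
      rw [← hkR, hmk]
      congr 2
      push_cast; ring
    have heq2 : 1 / (Real.exp 1 * (m:ℝ)) = 1 / (Real.exp 1 * ((k:ℝ)+1)) := by
      rw [hmk]; push_cast; ring_nf
    rw [heq2]
    calc 1 / (Real.exp 1 * ((k:ℝ)+1)) ≤ (k:ℝ)^k / ((k:ℝ)+1)^(k+1) := hr
    _ = ((m:ℝ)-1)^k / (m:ℝ)^m := heq.symm
    _ ≤ (G:ℝ) / (m:ℝ)^n := hMm
  set q0 : ℝ := 1 / (Real.exp 1 * m) with hq0def
  have hq0pos : 0 < q0 := by positivity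
  -- M - G ≤ M * (1 - q0)
  have hsub : ((m^n - G : ℕ) : ℝ) = (m:ℝ)^n - G := by
    push_cast [Nat.cast_sub hG2]; ring
  have hMG : ((m^n - G : ℕ) : ℝ) ≤ (m:ℝ)^n * (1 - q0) := by
    rw [hsub]
    have : q0 * (m:ℝ)^n ≤ G := by
      rw [div_le_div_iff₀ (by positivity) hM] at hq0
      calc q0 * (m:ℝ)^n = 1 * (m:ℝ)^n / (Real.exp 1 * m) := by rw [hq0def]; ring
      _ ≤ (G:ℝ) := by
          rw [div_le_iff₀ (by positivity)]
          linarith [hq0]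
    nlinarith
  have hMGnn : (0:ℝ) ≤ ((m^n - G : ℕ) : ℝ) := by positivity
  have hq0le1 : q0 ≤ 1 := by
    have : (1:ℝ) ≤ Real.exp 1 * m := by
      nlinarith [Real.one_le_exp (le_of_lt Real.zero_lt_one), hm0, (by exact_mod_cast hm : (2:ℝ) ≤ m)]
    rw [hq0def, div_le_one (by positivity)]; linarith
  -- pow
  have hpow : ((m^n - G : ℕ) : ℝ)^d ≤ ((m:ℝ)^n)^d * Real.exp (-(q0 * d)) := by
    calc ((m^n - G : ℕ) : ℝ)^d ≤ ((m:ℝ)^n * (1 - q0))^d := by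
          apply pow_le_pow_left₀ hMGnn hMG
    _ = ((m:ℝ)^n)^d * (1 - q0)^d := by rw [mul_pow]
    _ ≤ ((m:ℝ)^n)^d * (Real.exp (-q0))^d := by
          apply mul_le_mul_of_nonneg_left _ (by positivity)
          apply pow_le_pow_left₀ (by linarith) _
          have := Real.add_one_le_exp (-q0); linarith
    _ = ((m:ℝ)^n)^d * Real.exp (-(q0 * d)) := by
          rw [← Real.exp_nat_mul]; congr 1; ring
  have hexp : Real.exp (-(q0 * d)) ≤ 1 / (n:ℝ)^2 := by
    have h2 : 2 * Real.log n ≤ q0 * d := by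
      rw [hq0def]
      rw [div_mul_eq_mul_div, le_div_iff₀ (by positivity)]
      calc 2 * Real.log n * (Real.exp 1 * m) = 2 * Real.exp 1 * m * Real.log n := by ring
      _ ≤ d := hd
      _ = 1 * d := (one_mul _).symm
    calc Real.exp (-(q0 * d)) ≤ Real.exp (-(2 * Real.log n)) := by
          apply Real.exp_le_exp.mpr; linarith
    _ = 1 / (n:ℝ)^2 := by
          rw [Real.exp_neg,
            show (2:ℝ) * Real.log n = Real.log ((n:ℝ)^2) by rw [Real.log_pow]; push_cast; ring,
            Real.exp_log (pow_pos hn0 2), one_div]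
  calc ((m^n - G : ℕ) : ℝ)^d * (n:ℝ)^2 ≤ (((m:ℝ)^n)^d * Real.exp (-(q0 * d))) * (n:ℝ)^2 := by
        gcongr
  _ ≤ (((m:ℝ)^n)^d * (1 / (n:ℝ)^2)) * (n:ℝ)^2 := by
        gcongr <;> first | positivity | exact hexp
  _ = ((m:ℝ)^n)^d := by
        field_simp

lemma count_good {P : Type*} [PartialOrder P] [Fintype P] [DecidableEq P]
    [DecidableRel ((· ≤ ·) : P → P → Prop)] (m : ℕ) [NeZero m] (hm : 2 ≤ m)
    (a b : P) (hab : ¬ a ≤ b) :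
    (univ.filter (fun h : P → Fin m => h b = 0 ∧ ∀ y, a ≤ y → h y ≠ 0)).card =
      (m-1)^((univ.filter (fun x => a ≤ x)).card) *
        m^(Fintype.card P - (univ.filter (fun x => a ≤ x)).card - 1) := by
  have hm0 : 0 < m := by omega
  set A : Finset P := univ.filter (fun x => a ≤ x) with hA
  set k : ℕ := A.card with hk
  have hbA : b ∉ A := by simp [hA, hab]
  set σ : P → Finset (Fin m) := fun x =>
    if x = b then ({(0 : Fin m)} : Finset (Fin m))
    else if a ≤ x then univ.filter (· ≠ (0 : Fin m)) else univ with hσ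
  have hfeq : univ.filter (fun h : P → Fin m => h b = 0 ∧ ∀ y, a ≤ y → h y ≠ 0)
      = Fintype.piFinset σ := by
    ext h
    simp only [mem_filter, mem_univ, true_and, Fintype.mem_piFinset, hσ]
    constructor
    · rintro ⟨h0, hnz⟩ x
      by_cases hxb : x = b
      · simp [hxb, h0]
      · by_cases hax : a ≤ x
        · simp [hxb, hax, hnz x hax]
        · simp [hxb, hax]
    · intro hall
      constructor
      · have := hall b
        simpa using this
      · intro y hy
        have := hall y
        have hyb : y ≠ b := fun h => hab (h ▸ hy)
        simpa [hyb, hy] using this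
  rw [hfeq, Fintype.card_piFinset]
  -- compute the product
  have hcards : ∀ x : P, (σ x).card = if x = b then 1 else if a ≤ x then m - 1 else m := by
    intro x
    by_cases hxb : x = b
    · simp [hσ, hxb]
    · by_cases hax : a ≤ x
      · simp only [hσ, hxb, if_false, hax, if_true]
        rw [Finset.filter_ne', Finset.card_erase_of_mem (mem_univ _)]
        simp
      · simp [hσ, hxb, hax]
  calc ∏ x : P, (σ x).card = (∏ x ∈ A, (σ x).card) * ∏ x ∈ Aᶜ, (σ x).card :=
        (Finset.prod_mul_prod_compl A _).symm
  _ = (m-1)^k * m^(Fintype.card P - k - 1) := by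
      congr 1
      · rw [Finset.prod_congr rfl (fun x hx => ?_), Finset.prod_const]
        have hax : a ≤ x := by simpa [hA] using hx
        have hxb : x ≠ b := fun h => hbA (h ▸ hx)
        rw [hcards x, if_neg hxb, if_pos hax]
      · have hbAc : b ∈ Aᶜ := by simpa using hbA
        rw [← Finset.insert_erase hbAc, Finset.prod_insert (Finset.notMem_erase _ _)]
        rw [hcards b, if_pos rfl, one_mul]
        rw [Finset.prod_congr rfl (fun x hx => ?_), Finset.prod_const]
        · congr 1
          rw [Finset.card_erase_of_mem hbAc, Finset.card_compl]
        · have hxb : x ≠ b := Finset.ne_of_mem_erase hx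
          have hxA : x ∉ A := by
            have := Finset.mem_of_mem_erase hx
            simpa using this
          have hax : ¬ a ≤ x := by simpa [hA] using hxA
          rw [hcards x, if_neg hxb, if_neg hax]

lemma nat_ineq (m n k : ℕ) (hm : 2 ≤ m) (hk : k ≤ m - 1) (hkn : k + 1 ≤ n) :
    (m-1)^(m-1) * m^n ≤ ((m-1)^k * m^(n-k-1)) * m^m := by
  calc (m-1)^(m-1) * m^n = ((m-1)^k * (m-1)^(m-1-k)) * m^n := by
        rw [← pow_add]; congr 2; omega
  _ ≤ ((m-1)^k * m^(m-1-k)) * m^n := by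
        gcongr <;> omega
  _ = (m-1)^k * m^((m-1-k) + n) := by rw [mul_assoc, ← pow_add]
  _ = (m-1)^k * m^((n-k-1) + m) := by congr 2; omega
  _ = ((m-1)^k * m^(n-k-1)) * m^m := by rw [pow_add, mul_assoc]


set_option maxHeartbeats 1000000 in
/-- A finite poset of cardinality `n ≥ 2` with maximum outdegree at most `υ`
has 2-dimension at most `⌈2e(υ+2) log n⌉`. -/
theorem dim2_le_of_outdegree (P : Type*) [PartialOrder P] [Fintype P] (n υ : ℕ)
    (hcard : Fintype.card P = n) (hn : 2 ≤ n)
    (hout : ∀ x : P, Set.ncard {y : P | x < y} ≤ υ) :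
    dim2 P ≤ ⌈2 * Real.exp 1 * ((υ : ℝ) + 2) * Real.log n⌉₊ := by
  classical
  set m : ℕ := υ + 2 with hmdef
  haveI : NeZero m := ⟨by omega⟩
  have hm : 2 ≤ m := by omega
  set d : ℕ := ⌈2 * Real.exp 1 * ((υ : ℝ) + 2) * Real.log n⌉₊ with hddef
  suffices hex : ∃ g : Fin d → P → Fin m,
      ∀ a b : P, ¬ a ≤ b → ∃ i, g i b = 0 ∧ ∀ y, a ≤ y → g i y ≠ 0 by
    obtain ⟨g, hg⟩ := hex
    apply Nat.sInf_le
    refine ⟨fun a => univ.filter (fun i => ∀ y, a ≤ y → g i y ≠ 0), fun a b => ?_⟩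
    constructor
    · intro hsub
      by_contra hab
      obtain ⟨i, h0, hnz⟩ := hg a b hab
      have hia : i ∈ univ.filter (fun i => ∀ y, a ≤ y → g i y ≠ 0) := by
        simp only [mem_filter, mem_univ, true_and]; exact hnz
      have hib := hsub hia
      simp only [mem_filter, mem_univ, true_and] at hib
      exact hib b le_rfl h0
    · intro hab i hi
      simp only [mem_filter, mem_univ, true_and] at hi ⊢
      exact fun y hy => hi y (hab.trans hy)
  -- counting argument
  by_contra hno
  push_neg at hno
  have hforall : ∀ g : Fin d → P → Fin m, ∃ a b : P, ¬ a ≤ b ∧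
      ∀ i, ¬ (g i b = 0 ∧ ∀ y, a ≤ y → g i y ≠ 0) := by
    intro g
    obtain ⟨a, b, hab, hb⟩ := hno g
    refine ⟨a, b, hab, fun i hgood => ?_⟩
    obtain ⟨h0, hnz⟩ := hgood
    obtain ⟨y, hy, h0y⟩ := hb i h0
    exact hnz y hy h0y
  have hcardfun : Fintype.card (P → Fin m) = m ^ n := by
    rw [Fintype.card_fun, Fintype.card_fin, hcard]
  set Good : P → P → (P → Fin m) → Prop :=
    fun a b h => h b = 0 ∧ ∀ y, a ≤ y → h y ≠ 0 with hGooddef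
  have hgoodcard : ∀ a b : P, ¬ a ≤ b →
      (m-1)^(m-1) * m^n ≤ (univ.filter (Good a b)).card * m^m ∧
      (univ.filter (Good a b)).card ≤ m^n := by
    intro a b hab
    set A : Finset P := univ.filter (fun x => a ≤ x) with hA
    have hk1 : A.card ≤ m - 1 := by
      have hsub : A ⊆ insert a (univ.filter (fun x => a < x)) := by
        intro x hx
        simp only [hA, mem_filter, mem_univ, true_and] at hx
        rcases eq_or_lt_of_le hx with h | h
        · simp [← h]
        · simp [h]
      have hlt : (univ.filter (fun x => a < x)).card ≤ υ := by
        have h := hout a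
        rwa [Set.ncard_eq_toFinset_card', Set.toFinset_setOf] at h
      calc A.card ≤ (insert a (univ.filter (fun x => a < x))).card := card_le_card hsub
      _ ≤ (univ.filter (fun x => a < x)).card + 1 := card_insert_le _ _
      _ ≤ υ + 1 := by omega
      _ = m - 1 := by omega
    have hbA : b ∉ A := by simp [hA, hab]
    have hk2 : A.card + 1 ≤ n := by
      have h := card_le_card (subset_univ (insert b A))
      rw [card_insert_of_notMem hbA, card_univ, hcard] at h
      omega
    have heq := count_good m hm a b hab
    rw [hcard] at heq
    constructor
    · exact le_trans (nat_ineq m n A.card hm hk1 hk2)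
        (le_of_eq (congrArg (· * m^m) heq.symm))
    · calc (univ.filter (Good a b)).card ≤ (univ : Finset (P → Fin m)).card :=
          card_filter_le _ _
      _ = m ^ n := by rw [card_univ, hcardfun]
  have hbadpair : ∀ a b : P,
      (univ.filter (fun g : Fin d → P → Fin m => ∀ i, ¬ Good a b (g i))).card
        = (m^n - (univ.filter (Good a b)).card)^d := by
    intro a b
    have h1 : univ.filter (fun g : Fin d → P → Fin m => ∀ i, ¬ Good a b (g i))
        = Fintype.piFinset (fun _ : Fin d => univ.filter (fun h => ¬ Good a b h)) := by
      ext g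
      simp [Fintype.mem_piFinset]
    rw [h1, Fintype.card_piFinset]
    have h2 : (univ.filter (fun h : P → Fin m => ¬ Good a b h)).card
        = m^n - (univ.filter (Good a b)).card := by
      have h3 := Finset.card_filter_add_card_filter_not
        (s := (univ : Finset (P → Fin m))) (p := Good a b)
      rw [card_univ, hcardfun] at h3
      omega
    rw [Finset.prod_const, h2, card_univ, Fintype.card_fin]
  set S : Finset (P × P) := (univ ×ˢ univ).filter (fun p : P × P => ¬ p.1 ≤ p.2) with hS
  have hScard : S.card ≤ n * n - n := by
    have hsub : S ⊆ univ.offDiag := by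
      intro p hp
      simp only [hS, mem_filter, mem_product] at hp
      simp only [Finset.mem_offDiag]
      exact ⟨mem_univ _, mem_univ _, fun h => hp.2 (le_of_eq h)⟩
    calc S.card ≤ (univ : Finset P).offDiag.card := card_le_card hsub
    _ = n * n - n := by rw [Finset.offDiag_card, card_univ, hcard]
  have hcover : (univ : Finset (Fin d → P → Fin m)) ⊆
      S.biUnion (fun p => univ.filter (fun g => ∀ i, ¬ Good p.1 p.2 (g i))) := by
    intro g _
    obtain ⟨a, b, hab, hbad⟩ := hforall g
    apply Finset.mem_biUnion.mpr
    refine ⟨(a, b), by simp [hS, hab], ?_⟩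
    simp only [mem_filter, mem_univ, true_and]
    exact hbad
  have hcount : ((m^n)^d : ℕ) ≤ ∑ p ∈ S, (m^n - (univ.filter (Good p.1 p.2)).card)^d := by
    have c1 : ((m^n)^d : ℕ) = (univ : Finset (Fin d → P → Fin m)).card := by
      rw [card_univ, Fintype.card_fun, hcardfun, Fintype.card_fin]
    have c2 := card_le_card hcover
    have c3 := Finset.card_biUnion_le (s := S)
      (t := fun p => univ.filter (fun g : Fin d → P → Fin m => ∀ i, ¬ Good p.1 p.2 (g i)))
    have c4 : ∑ p ∈ S, (univ.filter (fun g : Fin d → P → Fin m => ∀ i, ¬ Good p.1 p.2 (g i))).card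
        = ∑ p ∈ S, (m^n - (univ.filter (Good p.1 p.2)).card)^d :=
      Finset.sum_congr rfl (fun p _ => hbadpair p.1 p.2)
    rw [c1]
    exact le_trans c2 (le_of_le_of_eq c3 c4)
  -- real estimates
  have hdreal : 2 * Real.exp 1 * (m:ℝ) * Real.log n ≤ (d:ℝ) := by
    have h := Nat.le_ceil (2 * Real.exp 1 * ((υ:ℝ) + 2) * Real.log n)
    have hmc : (m:ℝ) = (υ:ℝ) + 2 := by rw [hmdef]; push_cast; ring
    rw [hmc, hddef]
    exact_mod_cast h
  have hn0 : (0:ℝ) < (n:ℝ) := by positivity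
  have hterm : ∀ p ∈ S, (((m^n - (univ.filter (Good p.1 p.2)).card)^d : ℕ) : ℝ)
      ≤ (((m:ℝ)^n)^d) / (n:ℝ)^2 := by
    intro p hp
    have hab : ¬ p.1 ≤ p.2 := by
      have := hp
      simp only [hS, mem_filter, mem_product] at this
      exact this.2
    obtain ⟨hG1, hG2⟩ := hgoodcard p.1 p.2 hab
    have hpp := perpair n m d ((univ.filter (Good p.1 p.2)).card) hn hm hG1 hG2 hdreal
    rw [le_div_iff₀ (by positivity), Nat.cast_pow]
    exact hpp
  have hsum : (((m^n)^d : ℕ) : ℝ) ≤ (S.card : ℝ) * ((((m:ℝ)^n)^d) / (n:ℝ)^2) := by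
    calc (((m^n)^d : ℕ) : ℝ)
        ≤ ((∑ p ∈ S, (m^n - (univ.filter (Good p.1 p.2)).card)^d : ℕ) : ℝ) := by
          exact_mod_cast hcount
    _ = ∑ p ∈ S, (((m^n - (univ.filter (Good p.1 p.2)).card)^d : ℕ) : ℝ) := by
          push_cast; ring
    _ ≤ S.card • ((((m:ℝ)^n)^d) / (n:ℝ)^2) := Finset.sum_le_card_nsmul _ _ _ hterm
    _ = (S.card : ℝ) * ((((m:ℝ)^n)^d) / (n:ℝ)^2) := by rw [nsmul_eq_mul]
  have hMcast : (((m^n)^d : ℕ) : ℝ) = ((m:ℝ)^n)^d := by push_cast; ring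
  have hSreal : (S.card : ℝ) < (n:ℝ)^2 := by
    calc (S.card : ℝ) ≤ ((n * n - n : ℕ) : ℝ) := by exact_mod_cast hScard
    _ < (n:ℝ)^2 := by
        have h1 : ((n * n - n : ℕ) : ℝ) = (n:ℝ) * n - n := by
          rw [Nat.cast_sub (Nat.le_mul_of_pos_left n (by omega))]
          push_cast; ring
        rw [h1]
        nlinarith
  have hMpos : (0:ℝ) < ((m:ℝ)^n)^d := by positivity
  rw [hMcast] at hsum
  have : (S.card : ℝ) * ((((m:ℝ)^n)^d) / (n:ℝ)^2) < ((m:ℝ)^n)^d := by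
    rw [mul_div_assoc'] at *
    rw [div_lt_iff₀ (by positivity)]
    calc (S.card : ℝ) * (((m:ℝ)^n)^d) < (n:ℝ)^2 * (((m:ℝ)^n)^d) := by
          apply mul_lt_mul_of_pos_right hSreal hMpos
    _ = ((m:ℝ)^n)^d * (n:ℝ)^2 := by ring
  linarith
end
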